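/- arXiv:1904.06561 — 3 statements merged into one kernel-verified Lean document; each statement's English description precedes it below -/
import Mathlib

section
/- (Theorem 3.1, first-order variation formula.) Suppose the costate ψ satisfies the Hamiltonian equation ψ(x) = ∇_φH(x) for a.e. x ∈ G, i.e. ψ(x) = ∇_φF₁(x,φ(x),u(x)) + ∫_G ∇_{φ(x)}F₂(x,z,φ(x),φ(z),u(x),u(z)) dz + ∫_G ψ(y)∇_φf₁(y,x,φ(x),u(x)) dy + ∫_G ∫_G ψ(y)∇_{φ(x)}f₂(y,x,z,φ(x),φ(z),u(x),u(z)) dz dy, and suppose bounded measurable variations δφ : G → ℝ^n, δu : G → ℝ^m satisfy the linearized state equation δφ(x) = ∫_G [∇_φf₁(x,y,φ(y),u(y))δφ(y) + ∇_uf₁(x,y,φ(y),u(y))δu(y)] dy + ∫_G ∫_G [∇_{φ(y)}f₂(x,y,z,φ(y),φ(z),u(y),u(z))δφ(y) + ∇_{u(y)}f₂(x,y,z,φ(y),φ(z),u(y),u(z))δu(y)] dz dy for a.e. x ∈ G. Then the first variation of the cost, δJ := ∫_G [∇_φF₁(x,φ(x),u(x))δφ(x) + ∇_uF₁(x,φ(x),u(x))δu(x)]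 dx + ∫_G ∫_G [∇_{φ(x)}F₂(x,z,φ(x),φ(z),u(x),u(z))δφ(x) + ∇_{u(x)}F₂(x,z,φ(x),φ(z),u(x),u(z))δu(x)] dz dx, equals ∫_G (∇_uH(x)) δu(x) dx. -/
open MeasureTheory Set

/-- The Hamiltonian (3.8) of the controlled double Fredholm problem:
`H(x,η,ν) = F₁(x,η,ν) + ∫_G F₂(x,z,η,φ(z),ν,u(z)) dz + ∫_G ψ(y) f₁(y,x,η,ν) dy
  + ∫_G ∫_G ψ(y) f₂(y,x,z,η,φ(z),ν,u(z)) dz dy`. -/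
noncomputable def fredholmHamiltonian {d n m : ℕ} (G : Set (Fin d → ℝ))
    (f₁ : (Fin d → ℝ) → (Fin d → ℝ) → (Fin n → ℝ) → (Fin m → ℝ) → (Fin n → ℝ))
    (f₂ : (Fin d → ℝ) → (Fin d → ℝ) → (Fin d → ℝ) →
      (Fin n → ℝ) → (Fin n → ℝ) → (Fin m → ℝ) → (Fin m → ℝ) → (Fin n → ℝ))
    (F₁ : (Fin d → ℝ) → (Fin n → ℝ) → (Fin m → ℝ) → ℝ)
    (F₂ : (Fin d → ℝ) → (Fin d → ℝ) →
      (Fin n → ℝ) → (Fin n → ℝ) → (Fin m → ℝ) → (Fin m → ℝ) → ℝ)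
    (φ : (Fin d → ℝ) → (Fin n → ℝ)) (u : (Fin d → ℝ) → (Fin m → ℝ))
    (ψ : (Fin d → ℝ) → ((Fin n → ℝ) →L[ℝ] ℝ))
    (x : Fin d → ℝ) (η : Fin n → ℝ) (ν : Fin m → ℝ) : ℝ :=
  F₁ x η ν + (∫ z in G, F₂ x z η (φ z) ν (u z)) +
    (∫ y in G, ψ y (f₁ y x η ν)) +
    ∫ y in G, ∫ z in G, ψ y (f₂ y x z η (φ z) ν (u z))

/-!
Pair the costate with the state variation in two ways. Integrating the costate equation
`ψ = ∇_φ H` against `δφ` gives `∫ ψ δφ` as the state part of `δJ` plus the adjoint kernel terms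
`∫∫ ψ(y) ∇_φ f(y, x) δφ(x)`; integrating `ψ` against the linearized state equation gives
`∫ ψ δφ` as the kernel terms `∫∫ ψ(x) ∇_φ f(x, y) δφ(y)` plus the control terms
`∫∫ ψ(x) ∇_u f(x, y) δu(y)`. By Fubini the two families of `δφ`-kernel terms coincide, so the
state part of `δJ` equals the control terms, and these together with the control part of `δJ`
are exactly `∫ ∇_u H δu`.

Every integrand is bounded and measurable on a set of finite measure, which is all that
differentiation under the integral sign and Fubini need.
-/

open Filter Topology

section BoundedStronglyMeasurable

variable {α β E F : Type*} [MeasurableSpace α] [MeasurableSpace β]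
  [NormedAddCommGroup E] [NormedAddCommGroup F]

structure BoundedStronglyMeasurable (f : α → F) : Prop where
  stronglyMeasurable : StronglyMeasurable f
  bounded : ∃ C, ∀ a, ‖f a‖ ≤ C

namespace BoundedStronglyMeasurable

theorem integrable {μ : Measure α} [IsFiniteMeasure μ] {f : α → F}
    (hf : BoundedStronglyMeasurable f) : Integrable f μ :=
  let ⟨C, hC⟩ := hf.bounded
  .of_bound hf.stronglyMeasurable.aestronglyMeasurable C (.of_forall hC)

theorem comp_measurable {f : α → F} (hf : BoundedStronglyMeasurable f) {σ : β → α}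
    (hσ : Measurable σ) : BoundedStronglyMeasurable fun b => f (σ b) :=
  let ⟨C, hC⟩ := hf.bounded
  ⟨hf.stronglyMeasurable.comp_measurable hσ, C, fun b => hC (σ b)⟩

theorem add {f g : α → F} (hf : BoundedStronglyMeasurable f)
    (hg : BoundedStronglyMeasurable g) : BoundedStronglyMeasurable fun a => f a + g a :=
  let ⟨Cf, hCf⟩ := hf.bounded
  let ⟨Cg, hCg⟩ := hg.bounded
  ⟨hf.stronglyMeasurable.add hg.stronglyMeasurable, Cf + Cg,
    fun a => (norm_add_le _ _).trans (add_le_add (hCf a) (hCg a))⟩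

theorem clm_apply [NormedSpace ℝ E] [NormedSpace ℝ F] {L : α → E →L[ℝ] F} {v : α → E}
    (hL : BoundedStronglyMeasurable L) (hv : BoundedStronglyMeasurable v) :
    BoundedStronglyMeasurable fun a => L a (v a) :=
  let ⟨CL, hCL⟩ := hL.bounded
  let ⟨Cv, hCv⟩ := hv.bounded
  ⟨isBoundedBilinearMap_apply.continuous.comp_stronglyMeasurable
      (hL.stronglyMeasurable.prodMk hv.stronglyMeasurable),
    CL * Cv, fun a => (L a).le_of_opNorm_le_of_le (hCL a) (hCv a)⟩

variable [NormedSpace ℝ F]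

theorem integral_prod_right {ν : Measure β} [IsFiniteMeasure ν] {f : α × β → F}
    (hf : BoundedStronglyMeasurable f) : BoundedStronglyMeasurable fun a => ∫ b, f (a, b) ∂ν :=
  let ⟨C, hC⟩ := hf.bounded
  ⟨hf.stronglyMeasurable.integral_prod_right', C * ν.real univ,
    fun _ => norm_integral_le_of_norm_le_const (.of_forall fun _ => hC _)⟩

variable {μ : Measure α} [IsFiniteMeasure μ]

theorem integral_prod_right_assoc {f : α × α × α → F} (hf : BoundedStronglyMeasurable f) :
    BoundedStronglyMeasurable fun p : α × α => ∫ z, f (p.1, p.2, z) ∂μ :=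
  (hf.comp_measurable (measurable_fst.fst.prodMk (measurable_fst.snd.prodMk measurable_snd)) :
    BoundedStronglyMeasurable fun q : (α × α) × α => f (q.1.1, q.1.2, q.2)).integral_prod_right

theorem integral_integral_prod_right {f : α × α × α → F} (hf : BoundedStronglyMeasurable f) :
    BoundedStronglyMeasurable fun x => ∫ y, ∫ z, f (x, y, z) ∂μ ∂μ :=
  hf.integral_prod_right_assoc.integral_prod_right

theorem integral_integral_swap {f : α × α → F} (hf : BoundedStronglyMeasurable f) :
    ∫ x, ∫ y, f (y, x) ∂μ ∂μ = ∫ x, ∫ y, f (x, y) ∂μ ∂μ :=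
  MeasureTheory.integral_integral_swap (hf.comp_measurable measurable_swap).integrable

theorem integral_integral_add {f g : α × α → F} (hf : BoundedStronglyMeasurable f)
    (hg : BoundedStronglyMeasurable g) :
    ∫ x, ∫ y, (f (x, y) + g (x, y)) ∂μ ∂μ =
      (∫ x, ∫ y, f (x, y) ∂μ ∂μ) + ∫ x, ∫ y, g (x, y) ∂μ ∂μ := by
  have hsection : ∀ x, ∫ y, (f (x, y) + g (x, y)) ∂μ = (∫ y, f (x, y) ∂μ) + ∫ y, g (x, y) ∂μ :=
    fun x => integral_add (hf.comp_measurable measurable_prodMk_left).integrable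
      (hg.comp_measurable measurable_prodMk_left).integrable
  simp_rw [hsection]
  exact integral_add hf.integral_prod_right.integrable hg.integral_prod_right.integrable

end BoundedStronglyMeasurable

namespace ContinuousLinearMap

variable [NormedSpace ℝ E] [CompleteSpace E] {μ : Measure α} [IsFiniteMeasure μ]

theorem apply_integral_add (L : E →L[ℝ] ℝ) {f g : α → E} (hf : BoundedStronglyMeasurable f)
    (hg : BoundedStronglyMeasurable g) :
    L (∫ a, (f a + g a) ∂μ) = (∫ a, L (f a) ∂μ) + ∫ a, L (g a) ∂μ := by
  rw [integral_add hf.integrable hg.integrable, map_add, L.integral_comp_comm hf.integrable,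
    L.integral_comp_comm hg.integrable]

theorem apply_integral_integral (L : E →L[ℝ] ℝ) {f : α × α → E}
    (hf : BoundedStronglyMeasurable f) :
    L (∫ x, ∫ y, f (x, y) ∂μ ∂μ) = ∫ x, ∫ y, L (f (x, y)) ∂μ ∂μ := by
  rw [← L.integral_comp_comm hf.integral_prod_right.integrable]
  exact integral_congr_ae (.of_forall fun x =>
    (L.integral_comp_comm (hf.comp_measurable measurable_prodMk_left).integrable).symm)

theorem apply_integral_integral_add (L : E →L[ℝ] ℝ) {f g : α × α → E}
    (hf : BoundedStronglyMeasurable f) (hg : BoundedStronglyMeasurable g) :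
    L (∫ x, ∫ y, (f (x, y) + g (x, y)) ∂μ ∂μ) =
      (∫ x, ∫ y, L (f (x, y)) ∂μ ∂μ) + ∫ x, ∫ y, L (g (x, y)) ∂μ ∂μ := by
  rw [hf.integral_integral_add hg, map_add, L.apply_integral_integral hf,
    L.apply_integral_integral hg]

end ContinuousLinearMap

end BoundedStronglyMeasurable

section KernelIntegrals

variable {α : Type*} [MeasurableSpace α] {μ : Measure α} [IsFiniteMeasure μ]

theorem integral_add_kernel_integrals_transpose {a : α → ℝ} {b c : α × α → ℝ}
    {e : α × α × α → ℝ} (ha : BoundedStronglyMeasurable a) (hb : BoundedStronglyMeasurable b)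
    (hc : BoundedStronglyMeasurable c) (he : BoundedStronglyMeasurable e) :
    ∫ x, (a x + (∫ z, b (x, z) ∂μ) + (∫ y, c (y, x) ∂μ) + ∫ y, ∫ z, e (y, x, z) ∂μ ∂μ) ∂μ =
      (∫ x, a x ∂μ) + (∫ x, ∫ z, b (x, z) ∂μ ∂μ) + (∫ x, ∫ y, c (x, y) ∂μ ∂μ) +
        ∫ x, ∫ y, ∫ z, e (x, y, z) ∂μ ∂μ ∂μ := by
  have he' : BoundedStronglyMeasurable fun p : α × α => ∫ z, e (p.1, p.2, z) ∂μ :=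
    he.integral_prod_right_assoc
  have hB : BoundedStronglyMeasurable fun x => ∫ z, b (x, z) ∂μ := hb.integral_prod_right
  have hC : BoundedStronglyMeasurable fun x => ∫ y, c (y, x) ∂μ :=
    (hc.comp_measurable measurable_swap).integral_prod_right
  have hE : BoundedStronglyMeasurable fun x => ∫ y, ∫ z, e (y, x, z) ∂μ ∂μ :=
    (he'.comp_measurable measurable_swap).integral_prod_right
  have hc_swap : ∫ x, ∫ y, c (y, x) ∂μ ∂μ = ∫ x, ∫ y, c (x, y) ∂μ ∂μ := hc.integral_integral_swap
  have he_swap : ∫ x, ∫ y, ∫ z, e (y, x, z) ∂μ ∂μ ∂μ = ∫ x, ∫ y, ∫ z, e (x, y, z) ∂μ ∂μ ∂μ :=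
    he'.integral_integral_swap
  rw [integral_add ((ha.add hB).add hC).integrable hE.integrable,
    integral_add (ha.add hB).integrable hC.integrable, integral_add ha.integrable hB.integrable,
    hc_swap, he_swap]

theorem integral_clm_apply_add_kernel_integrals {E : Type*} [NormedAddCommGroup E]
    [NormedSpace ℝ E] [CompleteSpace E] {ψ : α → E →L[ℝ] ℝ} {v₁ v₂ : α × α → E}
    {w₁ w₂ : α × α × α → E} (hψ : BoundedStronglyMeasurable ψ)
    (hv₁ : BoundedStronglyMeasurable v₁) (hv₂ : BoundedStronglyMeasurable v₂)
    (hw₁ : BoundedStronglyMeasurable w₁) (hw₂ : BoundedStronglyMeasurable w₂) :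
    ∫ x, ψ x ((∫ y, (v₁ (x, y) + v₂ (x, y)) ∂μ) +
        ∫ y, ∫ z, (w₁ (x, y, z) + w₂ (x, y, z)) ∂μ ∂μ) ∂μ =
      (∫ x, ∫ y, ψ x (v₁ (x, y)) ∂μ ∂μ) + (∫ x, ∫ y, ψ x (v₂ (x, y)) ∂μ ∂μ) +
        (∫ x, ∫ y, ∫ z, ψ x (w₁ (x, y, z)) ∂μ ∂μ ∂μ) +
          ∫ x, ∫ y, ∫ z, ψ x (w₂ (x, y, z)) ∂μ ∂μ ∂μ := by
  have hpoint : ∀ x, ψ x ((∫ y, (v₁ (x, y) + v₂ (x, y)) ∂μ) +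
      ∫ y, ∫ z, (w₁ (x, y, z) + w₂ (x, y, z)) ∂μ ∂μ) =
      (∫ y, ψ x (v₁ (x, y)) ∂μ) + (∫ y, ψ x (v₂ (x, y)) ∂μ) +
        ((∫ y, ∫ z, ψ x (w₁ (x, y, z)) ∂μ ∂μ) + ∫ y, ∫ z, ψ x (w₂ (x, y, z)) ∂μ ∂μ) := fun x => by
    rw [map_add, (ψ x).apply_integral_add (hv₁.comp_measurable measurable_prodMk_left)
        (hv₂.comp_measurable measurable_prodMk_left),
      (ψ x).apply_integral_integral_add (hw₁.comp_measurable measurable_prodMk_left)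
        (hw₂.comp_measurable measurable_prodMk_left)]
  have hV : ∀ {f : α × α → E}, BoundedStronglyMeasurable f →
      BoundedStronglyMeasurable fun x => ∫ y, ψ x (f (x, y)) ∂μ :=
    fun hf => ((hψ.comp_measurable measurable_fst).clm_apply hf).integral_prod_right
  have hW : ∀ {f : α × α × α → E}, BoundedStronglyMeasurable f →
      BoundedStronglyMeasurable fun x => ∫ y, ∫ z, ψ x (f (x, y, z)) ∂μ ∂μ :=
    fun hf => ((hψ.comp_measurable measurable_fst).clm_apply hf).integral_integral_prod_right
  simp_rw [hpoint]
  rw [integral_add ((hV hv₁).add (hV hv₂)).integrable ((hW hw₁).add (hW hw₂)).integrable,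
    integral_add (hV hv₁).integrable (hV hv₂).integrable,
    integral_add (hW hw₁).integrable (hW hw₂).integrable]
  ring

end KernelIntegrals

section FDerivMeasurable

variable {α E F : Type*} [MeasurableSpace α]
  [NormedAddCommGroup E] [NormedSpace ℝ E] [NormedAddCommGroup F] [NormedSpace ℝ F]

theorem stronglyMeasurable_continuousLinearMap_of_apply [FiniteDimensional ℝ E]
    {L : α → E →L[ℝ] F} (h : ∀ v, StronglyMeasurable fun a => L a v) : StronglyMeasurable L := by
  let b := Module.finBasis ℝ E
  have hsum : ∀ a, L a = ∑ i, (b.coord i).toContinuousLinearMap.smulRight (L a (b i)) := by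
    intro a
    ext v
    simp only [FunLike.coe_sum, Finset.sum_apply, ContinuousLinearMap.smulRight_apply,
      LinearMap.coe_toContinuousLinearMap', Module.Basis.coord_apply]
    conv_lhs => rw [← b.sum_repr v]
    rw [map_sum]
    exact Finset.sum_congr rfl fun i _ => (L a).map_smul _ _
  rw [funext hsum]
  exact Finset.stronglyMeasurable_fun_sum _ fun i _ =>
    (ContinuousLinearMap.smulRightL ℝ E F _).continuous.comp_stronglyMeasurable (h (b i))

theorem stronglyMeasurable_fderiv_apply [MeasurableSpace E] [BorelSpace E] {g : α → E → F}
    (hg : StronglyMeasurable fun p : α × E => g p.1 p.2) {p : α → E} (hp : Measurable p)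
    (hdiff : ∀ a, DifferentiableAt ℝ (g a) (p a)) (v : E) :
    StronglyMeasurable fun a => fderiv ℝ (g a) (p a) v := by
  have hc : Tendsto (fun j : ℕ => ‖(j : ℝ)‖) atTop atTop := by
    simpa using tendsto_natCast_atTop_atTop
  -- `fderiv ℝ (g a) (p a) v` is the limit of `j • (g a (p a + j⁻¹ • v) - g a (p a))`
  refine stronglyMeasurable_of_tendsto atTop (fun j : ℕ => ?_)
    (tendsto_pi_nhds.2 fun a => (hdiff a).hasFDerivAt.lim v hc)
  exact ((hg.comp_measurable (measurable_id.prodMk (hp.add_const _))).sub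
    (hg.comp_measurable (measurable_id.prodMk hp))).const_smul _

end FDerivMeasurable

theorem ContinuousLinearMap.fderiv_comp_apply {P F G : Type*} [NormedAddCommGroup P]
    [NormedSpace ℝ P] [NormedAddCommGroup F] [NormedSpace ℝ F] [NormedAddCommGroup G]
    [NormedSpace ℝ G] (L : F →L[ℝ] G) {f : P → F} {w : P} (hf : DifferentiableAt ℝ f w)
    (v : P) : fderiv ℝ (fun w => L (f w)) w v = L (fderiv ℝ f w v) := by
  have h : HasFDerivAt (fun w => L (f w)) (L.comp (fderiv ℝ f w)) w :=
    L.hasFDerivAt.comp w hf.hasFDerivAt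
  rw [h.fderiv]
  rfl

section BoundedC1Family

variable {α β P Q F G : Type*} [MeasurableSpace α] [MeasurableSpace β]
  [NormedAddCommGroup P] [NormedSpace ℝ P] [MeasurableSpace P]
  [NormedAddCommGroup F] [NormedSpace ℝ F]

structure BoundedC1Family (g : α → P → F) : Prop where
  stronglyMeasurable : StronglyMeasurable fun p : α × P => g p.1 p.2
  differentiable : ∀ a, Differentiable ℝ (g a)
  bounded : ∃ C, ∀ a w, ‖g a w‖ ≤ C ∧ ‖fderiv ℝ (g a) w‖ ≤ C

namespace BoundedC1Family

theorem of_contDiff {g : α → P → F} (hg : StronglyMeasurable fun p : α × P => g p.1 p.2)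
    (hsmooth : ∀ a, ContDiff ℝ 1 (g a))
    (hbd : ∃ C, ∀ a w k, k ≤ 1 → ‖iteratedFDeriv ℝ k (g a) w‖ ≤ C) : BoundedC1Family g := by
  obtain ⟨C, hC⟩ := hbd
  refine ⟨hg, fun a => (hsmooth a).differentiable one_ne_zero, C, fun a w => ⟨?_, ?_⟩⟩
  · simpa only [norm_iteratedFDeriv_zero] using hC a w 0 zero_le_one
  · simpa only [norm_iteratedFDeriv_one] using hC a w 1 le_rfl

theorem comp [NormedAddCommGroup Q] [NormedSpace ℝ Q] [MeasurableSpace Q] {g : α → Q → F}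
    (hg : BoundedC1Family g) {σ : β → α} (hσ : Measurable σ) {c : β → P → Q}
    (hc : Measurable fun p : β × P => c p.1 p.2) {L : P →L[ℝ] Q}
    (hcL : ∀ b w, HasFDerivAt (c b) L w) :
    BoundedC1Family fun b w => g (σ b) (c b w) := by
  obtain ⟨C, hC⟩ := hg.bounded
  have hderiv : ∀ b w, HasFDerivAt (fun w => g (σ b) (c b w))
      ((_root_.fderiv ℝ (g (σ b)) (c b w)).comp L) w :=
    fun b w => (hg.differentiable (σ b) (c b w)).hasFDerivAt.comp w (hcL b w)
  refine ⟨hg.stronglyMeasurable.comp_measurable ((hσ.comp measurable_fst).prodMk hc),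
    fun b w => (hderiv b w).differentiableAt, max C (C * ‖L‖), fun b w => ⟨?_, ?_⟩⟩
  · exact (hC _ _).1.trans (le_max_left _ _)
  · rw [(hderiv b w).fderiv]
    exact ((_root_.fderiv ℝ (g (σ b)) (c b w)).opNorm_comp_le L).trans
      ((mul_le_mul_of_nonneg_right (hC _ _).2 (norm_nonneg L)).trans (le_max_right _ _))

theorem comp_measurable {g : α → P → F} (hg : BoundedC1Family g) {σ : β → α}
    (hσ : Measurable σ) : BoundedC1Family fun b => g (σ b) :=
  hg.comp hσ measurable_snd (fun _ w => hasFDerivAt_id w)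

theorem boundedStronglyMeasurable_apply {g : α → P → F} (hg : BoundedC1Family g) {p : α → P}
    (hp : Measurable p) : BoundedStronglyMeasurable fun a => g a (p a) :=
  let ⟨C, hC⟩ := hg.bounded
  ⟨hg.stronglyMeasurable.comp_measurable (measurable_id.prodMk hp), C, fun a => (hC a _).1⟩

theorem clm_apply [NormedAddCommGroup G] [NormedSpace ℝ G] {g : α → P → F}
    (hg : BoundedC1Family g) {ψ : α → F →L[ℝ] G} (hψ : BoundedStronglyMeasurable ψ) :
    BoundedC1Family fun a w => ψ a (g a w) := by
  obtain ⟨C, hC⟩ := hg.bounded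
  obtain ⟨K, hK⟩ := hψ.bounded
  have hderiv : ∀ a w, HasFDerivAt (fun w => ψ a (g a w))
      ((ψ a).comp (_root_.fderiv ℝ (g a) w)) w :=
    fun a w => (ψ a).hasFDerivAt.comp w (hg.differentiable a w).hasFDerivAt
  refine ⟨isBoundedBilinearMap_apply.continuous.comp_stronglyMeasurable
      ((hψ.stronglyMeasurable.comp_measurable measurable_fst).prodMk hg.stronglyMeasurable),
    fun a w => (hderiv a w).differentiableAt, K * C,
    fun a w => ⟨(ψ a).le_of_opNorm_le_of_le (hK a) (hC a w).1, ?_⟩⟩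
  rw [(hderiv a w).fderiv]
  exact ((ψ a).opNorm_comp_le _).trans
    (mul_le_mul (hK a) (hC a w).2 (norm_nonneg _) ((norm_nonneg _).trans (hK a)))

variable [BorelSpace P] [FiniteDimensional ℝ P]

theorem boundedStronglyMeasurable_fderiv {g : α → P → F} (hg : BoundedC1Family g) {p : α → P}
    (hp : Measurable p) : BoundedStronglyMeasurable fun a => _root_.fderiv ℝ (g a) (p a) :=
  let ⟨C, hC⟩ := hg.bounded
  ⟨stronglyMeasurable_continuousLinearMap_of_apply fun v =>
      stronglyMeasurable_fderiv_apply hg.stronglyMeasurable hp (fun a => hg.differentiable a _) v,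
    C, fun a => (hC a (p a)).2⟩

theorem boundedStronglyMeasurable_fderiv_apply {g : α → P → F} (hg : BoundedC1Family g)
    {p v : α → P} (hp : Measurable p) (hv : BoundedStronglyMeasurable v) :
    BoundedStronglyMeasurable fun a => _root_.fderiv ℝ (g a) (p a) (v a) :=
  (hg.boundedStronglyMeasurable_fderiv hp).clm_apply hv

variable {μ : Measure α} [IsFiniteMeasure μ]

theorem hasFDerivAt_integral {g : α → P → F} (hg : BoundedC1Family g) (w₀ : P) :
    HasFDerivAt (fun w => ∫ a, g a w ∂μ) (∫ a, _root_.fderiv ℝ (g a) w₀ ∂μ) w₀ :=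
  let ⟨C, hC⟩ := hg.bounded
  hasFDerivAt_integral_of_dominated_of_fderiv_le (F' := fun w a => _root_.fderiv ℝ (g a) w)
    (bound := fun _ => C) univ_mem
    (.of_forall fun _ =>
      (hg.boundedStronglyMeasurable_apply measurable_const).stronglyMeasurable.aestronglyMeasurable)
    (hg.boundedStronglyMeasurable_apply measurable_const).integrable
    (hg.boundedStronglyMeasurable_fderiv measurable_const).stronglyMeasurable.aestronglyMeasurable
    (.of_forall fun a w _ => (hC a w).2) (integrable_const C)
    (.of_forall fun a w _ => (hg.differentiable a w).hasFDerivAt)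

theorem differentiableAt_integral {g : α → P → F} (hg : BoundedC1Family g) (w : P) :
    DifferentiableAt ℝ (fun w => ∫ a, g a w ∂μ) w :=
  (hg.hasFDerivAt_integral w).differentiableAt

theorem fderiv_integral_apply {g : α → P → F} (hg : BoundedC1Family g) (w₀ v : P) :
    _root_.fderiv ℝ (fun w => ∫ a, g a w ∂μ) w₀ v = ∫ a, _root_.fderiv ℝ (g a) w₀ v ∂μ := by
  rw [(hg.hasFDerivAt_integral w₀).fderiv, ContinuousLinearMap.integral_apply
    (hg.boundedStronglyMeasurable_fderiv measurable_const).integrable]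

theorem integral {g : α × β → P → F} (hg : BoundedC1Family g) {ν : Measure β}
    [IsFiniteMeasure ν] :
    BoundedC1Family fun a w => ∫ b, g (a, b) w ∂ν := by
  obtain ⟨C, hC⟩ := hg.bounded
  have hsection : ∀ a, BoundedC1Family fun b => g (a, b) :=
    fun a => hg.comp_measurable measurable_prodMk_left
  refine ⟨?_, fun a w => ((hsection a).hasFDerivAt_integral w).differentiableAt,
    C * ν.real univ, fun a w => ⟨?_, ?_⟩⟩
  · exact (hg.stronglyMeasurable.comp_measurable
      ((measurable_fst.fst.prodMk measurable_snd).prodMk measurable_fst.snd)).integral_prod_right'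
  · exact norm_integral_le_of_norm_le_const (.of_forall fun b => (hC _ w).1)
  · rw [((hsection a).hasFDerivAt_integral w).fderiv]
    exact norm_integral_le_of_norm_le_const (.of_forall fun b => (hC _ w).2)

end BoundedC1Family

end BoundedC1Family

section Hamiltonian

variable {α P E : Type*} [MeasurableSpace α] {μ : Measure α} [IsFiniteMeasure μ]
  [NormedAddCommGroup P] [NormedSpace ℝ P] [FiniteDimensional ℝ P] [MeasurableSpace P]
  [BorelSpace P] [NormedAddCommGroup E] [NormedSpace ℝ E]

theorem fderiv_hamiltonian_apply {a : P → ℝ} {b : α → P → ℝ} {c : α → P → E}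
    {e : α → α → P → E} {ψ : α → E →L[ℝ] ℝ} {w : P} (ha : DifferentiableAt ℝ a w)
    (hb : BoundedC1Family b) (hc : BoundedC1Family c)
    (he : BoundedC1Family fun q : α × α => e q.1 q.2) (hψ : BoundedStronglyMeasurable ψ)
    (v : P) :
    fderiv ℝ (fun w => a w + (∫ z, b z w ∂μ) + (∫ y, ψ y (c y w) ∂μ) +
        ∫ y, ∫ z, ψ y (e y z w) ∂μ ∂μ) w v =
      fderiv ℝ a w v + (∫ z, fderiv ℝ (b z) w v ∂μ) + (∫ y, ψ y (fderiv ℝ (c y) w v) ∂μ) +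
        ∫ y, ∫ z, ψ y (fderiv ℝ (e y z) w v) ∂μ ∂μ := by
  have hψc := hc.clm_apply hψ
  have hψe : BoundedC1Family fun y w => ∫ z, ψ y (e y z w) ∂μ :=
    (he.clm_apply (hψ.comp_measurable measurable_fst)).integral
  have hB := hb.differentiableAt_integral (μ := μ) w
  have hC := hψc.differentiableAt_integral (μ := μ) w
  have hE := hψe.differentiableAt_integral (μ := μ) w
  rw [fderiv_fun_add ((ha.fun_add hB).fun_add hC) hE, fderiv_fun_add (ha.fun_add hB) hC,
    fderiv_fun_add ha hB]
  have hc' : ∀ y, fderiv ℝ (fun w => ψ y (c y w)) w v = ψ y (fderiv ℝ (c y) w v) :=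
    fun y => (ψ y).fderiv_comp_apply (hc.differentiable y w) v
  have he' : ∀ y, fderiv ℝ (fun w => ∫ z, ψ y (e y z w) ∂μ) w v =
      ∫ z, ψ y (fderiv ℝ (e y z) w v) ∂μ := fun y => by
    rw [((he.clm_apply (hψ.comp_measurable measurable_fst)).comp_measurable
      measurable_prodMk_left).fderiv_integral_apply]
    exact integral_congr_ae (.of_forall fun z =>
      (ψ y).fderiv_comp_apply (he.differentiable (y, z) w) v)
  simp only [add_apply, hb.fderiv_integral_apply, hψc.fderiv_integral_apply,
    hψe.fderiv_integral_apply, hc', he']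

end Hamiltonian

section FredholmData

variable {X E U : Type*} [MeasurableSpace X]
  [NormedAddCommGroup E] [NormedSpace ℝ E] [MeasurableSpace E]
  [NormedAddCommGroup U] [NormedSpace ℝ U] [MeasurableSpace U]

structure IsRegularFredholmData (f₁ : X → X → E → U → E) (f₂ : X → X → X → E → E → U → U → E)
    (F₁ : X → E → U → ℝ) (F₂ : X → X → E → E → U → U → ℝ) (φ : X → E) (u : X → U)
    (ψ : X → E →L[ℝ] ℝ) (δφ : X → E) (δu : X → U) : Prop where
  boundedC1_f₁ : BoundedC1Family fun (q : X × X) (p : E × U) => f₁ q.1 q.2 p.1 p.2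
  boundedC1_f₂ : BoundedC1Family fun (q : X × X × X) (p : E × E × U × U) =>
    f₂ q.1 q.2.1 q.2.2 p.1 p.2.1 p.2.2.1 p.2.2.2
  boundedC1_F₁ : BoundedC1Family fun (x : X) (p : E × U) => F₁ x p.1 p.2
  boundedC1_F₂ : BoundedC1Family fun (q : X × X) (p : E × E × U × U) =>
    F₂ q.1 q.2 p.1 p.2.1 p.2.2.1 p.2.2.2
  measurable_state : Measurable φ
  measurable_control : Measurable u
  bdd_costate : BoundedStronglyMeasurable ψ
  bdd_stateVariation : BoundedStronglyMeasurable δφ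
  bdd_controlVariation : BoundedStronglyMeasurable δu

namespace IsRegularFredholmData

variable {f₁ : X → X → E → U → E} {f₂ : X → X → X → E → E → U → U → E}
  {F₁ : X → E → U → ℝ} {F₂ : X → X → E → E → U → U → ℝ} {φ : X → E} {u : X → U}
  {ψ : X → E →L[ℝ] ℝ} {δφ : X → E} {δu : X → U}

theorem boundedC1_F₁_state (h : IsRegularFredholmData f₁ f₂ F₁ F₂ φ u ψ δφ δu) :
    BoundedC1Family fun x η => F₁ x η (u x) :=
  have hu := h.measurable_control
  h.boundedC1_F₁.comp (c := fun x η => (η, u x)) measurable_id (by fun_prop)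
    fun x η => hasFDerivAt_prodMk_left η (u x)

theorem boundedC1_F₁_control (h : IsRegularFredholmData f₁ f₂ F₁ F₂ φ u ψ δφ δu) :
    BoundedC1Family fun x ν => F₁ x (φ x) ν :=
  have hφ := h.measurable_state
  h.boundedC1_F₁.comp (c := fun x ν => (φ x, ν)) measurable_id (by fun_prop)
    fun x ν => hasFDerivAt_prodMk_right (φ x) ν

theorem boundedC1_F₂_state (h : IsRegularFredholmData f₁ f₂ F₁ F₂ φ u ψ δφ δu) :
    BoundedC1Family fun (q : X × X) η => F₂ q.1 q.2 η (φ q.2) (u q.1) (u q.2) :=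
  have hφ := h.measurable_state
  have hu := h.measurable_control
  h.boundedC1_F₂.comp (c := fun q η => (η, φ q.2, u q.1, u q.2)) measurable_id (by fun_prop)
    fun q η => hasFDerivAt_prodMk_left η _

theorem boundedC1_F₂_control (h : IsRegularFredholmData f₁ f₂ F₁ F₂ φ u ψ δφ δu) :
    BoundedC1Family fun (q : X × X) ν => F₂ q.1 q.2 (φ q.1) (φ q.2) ν (u q.2) :=
  have hφ := h.measurable_state
  have hu := h.measurable_control
  h.boundedC1_F₂.comp (c := fun q ν => (φ q.1, φ q.2, ν, u q.2)) measurable_id (by fun_prop)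
    fun q ν => (hasFDerivAt_const _ _).prodMk
      ((hasFDerivAt_const _ _).prodMk (hasFDerivAt_prodMk_left ν _))

theorem boundedC1_f₁_state (h : IsRegularFredholmData f₁ f₂ F₁ F₂ φ u ψ δφ δu) :
    BoundedC1Family fun (q : X × X) η => f₁ q.1 q.2 η (u q.2) :=
  have hu := h.measurable_control
  h.boundedC1_f₁.comp (c := fun q η => (η, u q.2)) measurable_id (by fun_prop)
    fun q η => hasFDerivAt_prodMk_left η _

theorem boundedC1_f₁_control (h : IsRegularFredholmData f₁ f₂ F₁ F₂ φ u ψ δφ δu) :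
    BoundedC1Family fun (q : X × X) ν => f₁ q.1 q.2 (φ q.2) ν :=
  have hφ := h.measurable_state
  h.boundedC1_f₁.comp (c := fun q ν => (φ q.2, ν)) measurable_id (by fun_prop)
    fun q ν => hasFDerivAt_prodMk_right _ ν

theorem boundedC1_f₂_state (h : IsRegularFredholmData f₁ f₂ F₁ F₂ φ u ψ δφ δu) :
    BoundedC1Family fun (q : X × X × X) η =>
      f₂ q.1 q.2.1 q.2.2 η (φ q.2.2) (u q.2.1) (u q.2.2) :=
  have hφ := h.measurable_state
  have hu := h.measurable_control
  h.boundedC1_f₂.comp (c := fun q η => (η, φ q.2.2, u q.2.1, u q.2.2)) measurable_id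
    (by fun_prop)
    fun q η => hasFDerivAt_prodMk_left η _

theorem boundedC1_f₂_control (h : IsRegularFredholmData f₁ f₂ F₁ F₂ φ u ψ δφ δu) :
    BoundedC1Family fun (q : X × X × X) ν =>
      f₂ q.1 q.2.1 q.2.2 (φ q.2.1) (φ q.2.2) ν (u q.2.2) :=
  have hφ := h.measurable_state
  have hu := h.measurable_control
  h.boundedC1_f₂.comp (c := fun q ν => (φ q.2.1, φ q.2.2, ν, u q.2.2)) measurable_id
    (by fun_prop)
    fun q ν => (hasFDerivAt_const _ _).prodMk
      ((hasFDerivAt_const _ _).prodMk (hasFDerivAt_prodMk_left ν _))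

variable {Y F : Type*} [MeasurableSpace Y] [NormedAddCommGroup F] [NormedSpace ℝ F]

theorem bdd_fderiv_stateVariation [BorelSpace E] [FiniteDimensional ℝ E]
    (h : IsRegularFredholmData f₁ f₂ F₁ F₂ φ u ψ δφ δu) {g : Y → E → F}
    (hg : BoundedC1Family g) {π : Y → X} (hπ : Measurable π) :
    BoundedStronglyMeasurable fun y => fderiv ℝ (g y) (φ (π y)) (δφ (π y)) :=
  hg.boundedStronglyMeasurable_fderiv_apply (h.measurable_state.comp hπ)
    (h.bdd_stateVariation.comp_measurable hπ)

theorem bdd_fderiv_controlVariation [BorelSpace U] [FiniteDimensional ℝ U]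
    (h : IsRegularFredholmData f₁ f₂ F₁ F₂ φ u ψ δφ δu) {g : Y → U → F}
    (hg : BoundedC1Family g) {π : Y → X} (hπ : Measurable π) :
    BoundedStronglyMeasurable fun y => fderiv ℝ (g y) (u (π y)) (δu (π y)) :=
  hg.boundedStronglyMeasurable_fderiv_apply (h.measurable_control.comp hπ)
    (h.bdd_controlVariation.comp_measurable hπ)

theorem bdd_costate_apply (h : IsRegularFredholmData f₁ f₂ F₁ F₂ φ u ψ δφ δu) {k : X × Y → E}
    (hk : BoundedStronglyMeasurable k) : BoundedStronglyMeasurable fun q => ψ q.1 (k q) :=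
  (h.bdd_costate.comp_measurable measurable_fst).clm_apply hk

end IsRegularFredholmData

end FredholmData

section FredholmHamiltonian

variable {d n m : ℕ} {G : Set (Fin d → ℝ)} [IsFiniteMeasure (volume.restrict G)]
  {f₁ : (Fin d → ℝ) → (Fin d → ℝ) → (Fin n → ℝ) → (Fin m → ℝ) → (Fin n → ℝ)}
  {f₂ : (Fin d → ℝ) → (Fin d → ℝ) → (Fin d → ℝ) →
    (Fin n → ℝ) → (Fin n → ℝ) → (Fin m → ℝ) → (Fin m → ℝ) → (Fin n → ℝ)}
  {F₁ : (Fin d → ℝ) → (Fin n → ℝ) → (Fin m → ℝ) → ℝ}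
  {F₂ : (Fin d → ℝ) → (Fin d → ℝ) → (Fin n → ℝ) → (Fin n → ℝ) → (Fin m → ℝ) → (Fin m → ℝ) → ℝ}
  {φ : (Fin d → ℝ) → (Fin n → ℝ)} {u : (Fin d → ℝ) → (Fin m → ℝ)}
  {ψ : (Fin d → ℝ) → ((Fin n → ℝ) →L[ℝ] ℝ)}
  {δφ : (Fin d → ℝ) → (Fin n → ℝ)} {δu : (Fin d → ℝ) → (Fin m → ℝ)}

namespace IsRegularFredholmData

theorem fderiv_fredholmHamiltonian_state_apply
    (h : IsRegularFredholmData f₁ f₂ F₁ F₂ φ u ψ δφ δu) (x : Fin d → ℝ) :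
    fderiv ℝ (fun η => fredholmHamiltonian G f₁ f₂ F₁ F₂ φ u ψ x η (u x)) (φ x) (δφ x) =
      fderiv ℝ (fun η => F₁ x η (u x)) (φ x) (δφ x) +
        (∫ z in G, fderiv ℝ (fun η => F₂ x z η (φ z) (u x) (u z)) (φ x) (δφ x)) +
        (∫ y in G, ψ y (fderiv ℝ (fun η => f₁ y x η (u x)) (φ x) (δφ x))) +
        ∫ y in G, ∫ z in G, ψ y (fderiv ℝ (fun η => f₂ y x z η (φ z) (u x) (u z)) (φ x) (δφ x)) :=
  fderiv_hamiltonian_apply (h.boundedC1_F₁_state.differentiable x (φ x))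
    (h.boundedC1_F₂_state.comp_measurable measurable_prodMk_left)
    (h.boundedC1_f₁_state.comp_measurable measurable_prodMk_right)
    (h.boundedC1_f₂_state.comp_measurable
      (σ := fun q : (Fin d → ℝ) × (Fin d → ℝ) => (q.1, x, q.2)) (by fun_prop))
    h.bdd_costate (δφ x)

theorem fderiv_fredholmHamiltonian_control_apply
    (h : IsRegularFredholmData f₁ f₂ F₁ F₂ φ u ψ δφ δu) (x : Fin d → ℝ) :
    fderiv ℝ (fun ν => fredholmHamiltonian G f₁ f₂ F₁ F₂ φ u ψ x (φ x) ν) (u x) (δu x) =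
      fderiv ℝ (fun ν => F₁ x (φ x) ν) (u x) (δu x) +
        (∫ z in G, fderiv ℝ (fun ν => F₂ x z (φ x) (φ z) ν (u z)) (u x) (δu x)) +
        (∫ y in G, ψ y (fderiv ℝ (fun ν => f₁ y x (φ x) ν) (u x) (δu x))) +
        ∫ y in G, ∫ z in G, ψ y (fderiv ℝ (fun ν => f₂ y x z (φ x) (φ z) ν (u z)) (u x) (δu x)) :=
  fderiv_hamiltonian_apply (h.boundedC1_F₁_control.differentiable x (u x))
    (h.boundedC1_F₂_control.comp_measurable measurable_prodMk_left)
    (h.boundedC1_f₁_control.comp_measurable measurable_prodMk_right)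
    (h.boundedC1_f₂_control.comp_measurable
      (σ := fun q : (Fin d → ℝ) × (Fin d → ℝ) => (q.1, x, q.2)) (by fun_prop))
    h.bdd_costate (δu x)

theorem integral_costate_pairing (h : IsRegularFredholmData f₁ f₂ F₁ F₂ φ u ψ δφ δu)
    (hcostate : ∀ᵐ x ∂volume.restrict G,
      ψ x = fderiv ℝ (fun η => fredholmHamiltonian G f₁ f₂ F₁ F₂ φ u ψ x η (u x)) (φ x)) :
    ∫ x in G, ψ x (δφ x) =
      (∫ x in G, fderiv ℝ (fun η => F₁ x η (u x)) (φ x) (δφ x)) +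
        (∫ x in G, ∫ z in G, fderiv ℝ (fun η => F₂ x z η (φ z) (u x) (u z)) (φ x) (δφ x)) +
        (∫ x in G, ∫ y in G, ψ x (fderiv ℝ (fun η => f₁ x y η (u y)) (φ y) (δφ y))) +
        ∫ x in G, ∫ y in G, ∫ z in G,
          ψ x (fderiv ℝ (fun η => f₂ x y z η (φ z) (u y) (u z)) (φ y) (δφ y)) := by
  rw [integral_congr_ae (hcostate.mono fun x hx => by
    rw [hx, h.fderiv_fredholmHamiltonian_state_apply])]
  exact integral_add_kernel_integrals_transpose
    (h.bdd_fderiv_stateVariation h.boundedC1_F₁_state measurable_id')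
    (h.bdd_fderiv_stateVariation h.boundedC1_F₂_state measurable_fst)
    (h.bdd_costate_apply (h.bdd_fderiv_stateVariation h.boundedC1_f₁_state measurable_snd))
    (h.bdd_costate_apply (h.bdd_fderiv_stateVariation h.boundedC1_f₂_state measurable_snd.fst))

theorem integral_fderiv_fredholmHamiltonian_control_apply
    (h : IsRegularFredholmData f₁ f₂ F₁ F₂ φ u ψ δφ δu) :
    ∫ x in G, fderiv ℝ (fun ν => fredholmHamiltonian G f₁ f₂ F₁ F₂ φ u ψ x (φ x) ν) (u x) (δu x) =
      (∫ x in G, fderiv ℝ (fun ν => F₁ x (φ x) ν) (u x) (δu x)) +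
        (∫ x in G, ∫ z in G, fderiv ℝ (fun ν => F₂ x z (φ x) (φ z) ν (u z)) (u x) (δu x)) +
        (∫ x in G, ∫ y in G, ψ x (fderiv ℝ (fun ν => f₁ x y (φ y) ν) (u y) (δu y))) +
        ∫ x in G, ∫ y in G, ∫ z in G,
          ψ x (fderiv ℝ (fun ν => f₂ x y z (φ y) (φ z) ν (u z)) (u y) (δu y)) := by
  simp_rw [h.fderiv_fredholmHamiltonian_control_apply]
  exact integral_add_kernel_integrals_transpose
    (h.bdd_fderiv_controlVariation h.boundedC1_F₁_control measurable_id')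
    (h.bdd_fderiv_controlVariation h.boundedC1_F₂_control measurable_fst)
    (h.bdd_costate_apply (h.bdd_fderiv_controlVariation h.boundedC1_f₁_control measurable_snd))
    (h.bdd_costate_apply (h.bdd_fderiv_controlVariation h.boundedC1_f₂_control measurable_snd.fst))

theorem integral_linearized_pairing (h : IsRegularFredholmData f₁ f₂ F₁ F₂ φ u ψ δφ δu)
    (hlin : ∀ᵐ x ∂volume.restrict G,
      δφ x =
        (∫ y in G,
          (fderiv ℝ (fun η => f₁ x y η (u y)) (φ y) (δφ y) +
            fderiv ℝ (fun ν => f₁ x y (φ y) ν) (u y) (δu y))) +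
        ∫ y in G, ∫ z in G,
          (fderiv ℝ (fun η => f₂ x y z η (φ z) (u y) (u z)) (φ y) (δφ y) +
            fderiv ℝ (fun ν => f₂ x y z (φ y) (φ z) ν (u z)) (u y) (δu y))) :
    ∫ x in G, ψ x (δφ x) =
      (∫ x in G, ∫ y in G, ψ x (fderiv ℝ (fun η => f₁ x y η (u y)) (φ y) (δφ y))) +
        (∫ x in G, ∫ y in G, ψ x (fderiv ℝ (fun ν => f₁ x y (φ y) ν) (u y) (δu y))) +
        (∫ x in G, ∫ y in G, ∫ z in G,
          ψ x (fderiv ℝ (fun η => f₂ x y z η (φ z) (u y) (u z)) (φ y) (δφ y))) +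
        ∫ x in G, ∫ y in G, ∫ z in G,
          ψ x (fderiv ℝ (fun ν => f₂ x y z (φ y) (φ z) ν (u z)) (u y) (δu y)) := by
  rw [integral_congr_ae (hlin.mono fun x hx => congrArg (ψ x) hx)]
  exact integral_clm_apply_add_kernel_integrals h.bdd_costate
    (h.bdd_fderiv_stateVariation h.boundedC1_f₁_state measurable_snd)
    (h.bdd_fderiv_controlVariation h.boundedC1_f₁_control measurable_snd)
    (h.bdd_fderiv_stateVariation h.boundedC1_f₂_state measurable_snd.fst)
    (h.bdd_fderiv_controlVariation h.boundedC1_f₂_control measurable_snd.fst)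

theorem first_variation_eq_state_add_control
    (h : IsRegularFredholmData f₁ f₂ F₁ F₂ φ u ψ δφ δu) :
    (∫ x in G,
      (fderiv ℝ (fun η => F₁ x η (u x)) (φ x) (δφ x) +
        fderiv ℝ (fun ν => F₁ x (φ x) ν) (u x) (δu x))) +
    (∫ x in G, ∫ z in G,
      (fderiv ℝ (fun η => F₂ x z η (φ z) (u x) (u z)) (φ x) (δφ x) +
        fderiv ℝ (fun ν => F₂ x z (φ x) (φ z) ν (u z)) (u x) (δu x))) =
      (∫ x in G, fderiv ℝ (fun η => F₁ x η (u x)) (φ x) (δφ x)) +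
        (∫ x in G, ∫ z in G, fderiv ℝ (fun η => F₂ x z η (φ z) (u x) (u z)) (φ x) (δφ x)) +
      ((∫ x in G, fderiv ℝ (fun ν => F₁ x (φ x) ν) (u x) (δu x)) +
        ∫ x in G, ∫ z in G, fderiv ℝ (fun ν => F₂ x z (φ x) (φ z) ν (u z)) (u x) (δu x)) := by
  have hF₂ := (h.bdd_fderiv_stateVariation h.boundedC1_F₂_state measurable_fst
    ).integral_integral_add (μ := volume.restrict G)
      (h.bdd_fderiv_controlVariation h.boundedC1_F₂_control measurable_fst)
  dsimp only at hF₂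
  rw [integral_add (h.bdd_fderiv_stateVariation h.boundedC1_F₁_state measurable_id').integrable
    (h.bdd_fderiv_controlVariation h.boundedC1_F₁_control measurable_id').integrable, hF₂]
  ring

end IsRegularFredholmData

end FredholmHamiltonian

theorem fredholm_first_variation_formula_general
    (d n m : ℕ) (G : Set (Fin d → ℝ))
    (hGfin : volume G < ⊤)
    (f₁ : (Fin d → ℝ) → (Fin d → ℝ) → (Fin n → ℝ) → (Fin m → ℝ) → (Fin n → ℝ))
    (f₂ : (Fin d → ℝ) → (Fin d → ℝ) → (Fin d → ℝ) →
      (Fin n → ℝ) → (Fin n → ℝ) → (Fin m → ℝ) → (Fin m → ℝ) → (Fin n → ℝ))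
    (F₁ : (Fin d → ℝ) → (Fin n → ℝ) → (Fin m → ℝ) → ℝ)
    (F₂ : (Fin d → ℝ) → (Fin d → ℝ) →
      (Fin n → ℝ) → (Fin n → ℝ) → (Fin m → ℝ) → (Fin m → ℝ) → ℝ)
    -- joint measurability of the data
    (hf₁meas : Measurable fun q : (Fin d → ℝ) × (Fin d → ℝ) × (Fin n → ℝ) × (Fin m → ℝ) =>
      f₁ q.1 q.2.1 q.2.2.1 q.2.2.2)
    (hf₂meas : Measurable fun q : (Fin d → ℝ) × (Fin d → ℝ) × (Fin d → ℝ) ×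
        (Fin n → ℝ) × (Fin n → ℝ) × (Fin m → ℝ) × (Fin m → ℝ) =>
      f₂ q.1 q.2.1 q.2.2.1 q.2.2.2.1 q.2.2.2.2.1 q.2.2.2.2.2.1 q.2.2.2.2.2.2)
    (hF₁meas : Measurable fun q : (Fin d → ℝ) × (Fin n → ℝ) × (Fin m → ℝ) =>
      F₁ q.1 q.2.1 q.2.2)
    (hF₂meas : Measurable fun q : (Fin d → ℝ) × (Fin d → ℝ) ×
        (Fin n → ℝ) × (Fin n → ℝ) × (Fin m → ℝ) × (Fin m → ℝ) =>
      F₂ q.1 q.2.1 q.2.2.1 q.2.2.2.1 q.2.2.2.2.1 q.2.2.2.2.2)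
    -- twice continuous differentiability in the state and control arguments
    (hf₁smooth : ∀ x y, ContDiff ℝ 2 fun p : (Fin n → ℝ) × (Fin m → ℝ) => f₁ x y p.1 p.2)
    (hf₂smooth : ∀ x y z, ContDiff ℝ 2
      fun p : (Fin n → ℝ) × (Fin n → ℝ) × (Fin m → ℝ) × (Fin m → ℝ) =>
        f₂ x y z p.1 p.2.1 p.2.2.1 p.2.2.2)
    (hF₁smooth : ∀ x, ContDiff ℝ 2 fun p : (Fin n → ℝ) × (Fin m → ℝ) => F₁ x p.1 p.2)
    (hF₂smooth : ∀ x z, ContDiff ℝ 2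
      fun p : (Fin n → ℝ) × (Fin n → ℝ) × (Fin m → ℝ) × (Fin m → ℝ) =>
        F₂ x z p.1 p.2.1 p.2.2.1 p.2.2.2)
    -- uniform bounds on the data and their derivatives up to order 2
    (hf₁bd : ∃ C, ∀ x y (p : (Fin n → ℝ) × (Fin m → ℝ)) (k : ℕ), k ≤ 2 →
      ‖iteratedFDeriv ℝ k (fun q : (Fin n → ℝ) × (Fin m → ℝ) => f₁ x y q.1 q.2) p‖ ≤ C)
    (hf₂bd : ∃ C, ∀ x y z (p : (Fin n → ℝ) × (Fin n → ℝ) × (Fin m → ℝ) × (Fin m → ℝ))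
      (k : ℕ), k ≤ 2 →
      ‖iteratedFDeriv ℝ k
        (fun q : (Fin n → ℝ) × (Fin n → ℝ) × (Fin m → ℝ) × (Fin m → ℝ) =>
          f₂ x y z q.1 q.2.1 q.2.2.1 q.2.2.2) p‖ ≤ C)
    (hF₁bd : ∃ C, ∀ x (p : (Fin n → ℝ) × (Fin m → ℝ)) (k : ℕ), k ≤ 2 →
      ‖iteratedFDeriv ℝ k (fun q : (Fin n → ℝ) × (Fin m → ℝ) => F₁ x q.1 q.2) p‖ ≤ C)
    (hF₂bd : ∃ C, ∀ x z (p : (Fin n → ℝ) × (Fin n → ℝ) × (Fin m → ℝ) × (Fin m → ℝ))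
      (k : ℕ), k ≤ 2 →
      ‖iteratedFDeriv ℝ k
        (fun q : (Fin n → ℝ) × (Fin n → ℝ) × (Fin m → ℝ) × (Fin m → ℝ) =>
          F₂ x z q.1 q.2.1 q.2.2.1 q.2.2.2) p‖ ≤ C)
    -- bounded measurable state, control, costate
    (φ : (Fin d → ℝ) → (Fin n → ℝ)) (u : (Fin d → ℝ) → (Fin m → ℝ))
    (ψ : (Fin d → ℝ) → ((Fin n → ℝ) →L[ℝ] ℝ))
    (hφ : Measurable φ) (hu : Measurable u)
    (hψ : StronglyMeasurable ψ) (hψbd : ∃ C, ∀ x, ‖ψ x‖ ≤ C)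
    -- bounded measurable variations
    (δφ : (Fin d → ℝ) → (Fin n → ℝ)) (δu : (Fin d → ℝ) → (Fin m → ℝ))
    (hδφ : Measurable δφ) (hδφbd : ∃ C, ∀ x, ‖δφ x‖ ≤ C)
    (hδu : Measurable δu) (hδubd : ∃ C, ∀ x, ‖δu x‖ ≤ C)
    -- the costate Hamiltonian equation ψ(x) = ∇_φ H(x) a.e. on G
    (hcostate : ∀ᵐ x ∂volume.restrict G,
      ψ x = fderiv ℝ (fun η => fredholmHamiltonian G f₁ f₂ F₁ F₂ φ u ψ x η (u x)) (φ x))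
    -- the linearized state equation a.e. on G
    (hlin : ∀ᵐ x ∂volume.restrict G,
      δφ x =
        (∫ y in G,
          (fderiv ℝ (fun η => f₁ x y η (u y)) (φ y) (δφ y) +
            fderiv ℝ (fun ν => f₁ x y (φ y) ν) (u y) (δu y))) +
        ∫ y in G, ∫ z in G,
          (fderiv ℝ (fun η => f₂ x y z η (φ z) (u y) (u z)) (φ y) (δφ y) +
            fderiv ℝ (fun ν => f₂ x y z (φ y) (φ z) ν (u z)) (u y) (δu y))) :
    -- conclusion: the first variation of the cost equals ∫_G ∇_u H(x) δu(x) dx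
    (∫ x in G,
      (fderiv ℝ (fun η => F₁ x η (u x)) (φ x) (δφ x) +
        fderiv ℝ (fun ν => F₁ x (φ x) ν) (u x) (δu x))) +
    (∫ x in G, ∫ z in G,
      (fderiv ℝ (fun η => F₂ x z η (φ z) (u x) (u z)) (φ x) (δφ x) +
        fderiv ℝ (fun ν => F₂ x z (φ x) (φ z) ν (u z)) (u x) (δu x))) =
    ∫ x in G,
      fderiv ℝ (fun ν => fredholmHamiltonian G f₁ f₂ F₁ F₂ φ u ψ x (φ x) ν) (u x) (δu x) := by
  have : IsFiniteMeasure (volume.restrict G) := isFiniteMeasure_restrict.2 hGfin.ne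
  have h : IsRegularFredholmData f₁ f₂ F₁ F₂ φ u ψ δφ δu :=
    { boundedC1_f₁ := .of_contDiff (by fun_prop : Measurable _).stronglyMeasurable
        (fun q => (hf₁smooth q.1 q.2).of_le one_le_two)
        (hf₁bd.imp fun _ hC q p k hk => hC q.1 q.2 p k (hk.trans one_le_two))
      boundedC1_f₂ := .of_contDiff (by fun_prop : Measurable _).stronglyMeasurable
        (fun q => (hf₂smooth q.1 q.2.1 q.2.2).of_le one_le_two)
        (hf₂bd.imp fun _ hC q p k hk => hC q.1 q.2.1 q.2.2 p k (hk.trans one_le_two))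
      boundedC1_F₁ := .of_contDiff (by fun_prop : Measurable _).stronglyMeasurable
        (fun x => (hF₁smooth x).of_le one_le_two)
        (hF₁bd.imp fun _ hC x p k hk => hC x p k (hk.trans one_le_two))
      boundedC1_F₂ := .of_contDiff (by fun_prop : Measurable _).stronglyMeasurable
        (fun q => (hF₂smooth q.1 q.2).of_le one_le_two)
        (hF₂bd.imp fun _ hC q p k hk => hC q.1 q.2 p k (hk.trans one_le_two))
      measurable_state := hφ
      measurable_control := hu
      bdd_costate := ⟨hψ, hψbd⟩
      bdd_stateVariation := ⟨hδφ.stronglyMeasurable, hδφbd⟩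
      bdd_controlVariation := ⟨hδu.stronglyMeasurable, hδubd⟩ }
  rw [h.first_variation_eq_state_add_control, h.integral_fderiv_fredholmHamiltonian_control_apply]
  linarith [h.integral_costate_pairing hcostate, h.integral_linearized_pairing hlin]

/-- Theorem 3.1 (first-order variation formula): if the costate satisfies the Hamiltonian
equation `ψ(x) = ∇_φ H(x)` a.e. and the variations satisfy the linearized state equation,
then the first variation of the cost equals `∫_G ∇_u H(x) δu(x) dx`. -/
theorem fredholm_first_variation_formula
    (d n m : ℕ) (G : Set (Fin d → ℝ)) (hG : MeasurableSet G)
    (hGfin : volume G < ⊤) (hGpos : 0 < volume G)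
    (f₁ : (Fin d → ℝ) → (Fin d → ℝ) → (Fin n → ℝ) → (Fin m → ℝ) → (Fin n → ℝ))
    (f₂ : (Fin d → ℝ) → (Fin d → ℝ) → (Fin d → ℝ) →
      (Fin n → ℝ) → (Fin n → ℝ) → (Fin m → ℝ) → (Fin m → ℝ) → (Fin n → ℝ))
    (F₁ : (Fin d → ℝ) → (Fin n → ℝ) → (Fin m → ℝ) → ℝ)
    (F₂ : (Fin d → ℝ) → (Fin d → ℝ) →
      (Fin n → ℝ) → (Fin n → ℝ) → (Fin m → ℝ) → (Fin m → ℝ) → ℝ)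
    -- joint measurability of the data
    (hf₁meas : Measurable fun q : (Fin d → ℝ) × (Fin d → ℝ) × (Fin n → ℝ) × (Fin m → ℝ) =>
      f₁ q.1 q.2.1 q.2.2.1 q.2.2.2)
    (hf₂meas : Measurable fun q : (Fin d → ℝ) × (Fin d → ℝ) × (Fin d → ℝ) ×
        (Fin n → ℝ) × (Fin n → ℝ) × (Fin m → ℝ) × (Fin m → ℝ) =>
      f₂ q.1 q.2.1 q.2.2.1 q.2.2.2.1 q.2.2.2.2.1 q.2.2.2.2.2.1 q.2.2.2.2.2.2)
    (hF₁meas : Measurable fun q : (Fin d → ℝ) × (Fin n → ℝ) × (Fin m → ℝ) =>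
      F₁ q.1 q.2.1 q.2.2)
    (hF₂meas : Measurable fun q : (Fin d → ℝ) × (Fin d → ℝ) ×
        (Fin n → ℝ) × (Fin n → ℝ) × (Fin m → ℝ) × (Fin m → ℝ) =>
      F₂ q.1 q.2.1 q.2.2.1 q.2.2.2.1 q.2.2.2.2.1 q.2.2.2.2.2)
    -- twice continuous differentiability in the state and control arguments
    (hf₁smooth : ∀ x y, ContDiff ℝ 2 fun p : (Fin n → ℝ) × (Fin m → ℝ) => f₁ x y p.1 p.2)
    (hf₂smooth : ∀ x y z, ContDiff ℝ 2
      fun p : (Fin n → ℝ) × (Fin n → ℝ) × (Fin m → ℝ) × (Fin m → ℝ) =>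
        f₂ x y z p.1 p.2.1 p.2.2.1 p.2.2.2)
    (hF₁smooth : ∀ x, ContDiff ℝ 2 fun p : (Fin n → ℝ) × (Fin m → ℝ) => F₁ x p.1 p.2)
    (hF₂smooth : ∀ x z, ContDiff ℝ 2
      fun p : (Fin n → ℝ) × (Fin n → ℝ) × (Fin m → ℝ) × (Fin m → ℝ) =>
        F₂ x z p.1 p.2.1 p.2.2.1 p.2.2.2)
    -- uniform bounds on the data and their derivatives up to order 2
    (hf₁bd : ∃ C, ∀ x y (p : (Fin n → ℝ) × (Fin m → ℝ)) (k : ℕ), k ≤ 2 →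
      ‖iteratedFDeriv ℝ k (fun q : (Fin n → ℝ) × (Fin m → ℝ) => f₁ x y q.1 q.2) p‖ ≤ C)
    (hf₂bd : ∃ C, ∀ x y z (p : (Fin n → ℝ) × (Fin n → ℝ) × (Fin m → ℝ) × (Fin m → ℝ))
      (k : ℕ), k ≤ 2 →
      ‖iteratedFDeriv ℝ k
        (fun q : (Fin n → ℝ) × (Fin n → ℝ) × (Fin m → ℝ) × (Fin m → ℝ) =>
          f₂ x y z q.1 q.2.1 q.2.2.1 q.2.2.2) p‖ ≤ C)
    (hF₁bd : ∃ C, ∀ x (p : (Fin n → ℝ) × (Fin m → ℝ)) (k : ℕ), k ≤ 2 →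
      ‖iteratedFDeriv ℝ k (fun q : (Fin n → ℝ) × (Fin m → ℝ) => F₁ x q.1 q.2) p‖ ≤ C)
    (hF₂bd : ∃ C, ∀ x z (p : (Fin n → ℝ) × (Fin n → ℝ) × (Fin m → ℝ) × (Fin m → ℝ))
      (k : ℕ), k ≤ 2 →
      ‖iteratedFDeriv ℝ k
        (fun q : (Fin n → ℝ) × (Fin n → ℝ) × (Fin m → ℝ) × (Fin m → ℝ) =>
          F₂ x z q.1 q.2.1 q.2.2.1 q.2.2.2) p‖ ≤ C)
    -- symmetry of f₂ and F₂
    (hf₂symm : ∀ x y z φ₁ φ₂ u₁ u₂, f₂ x y z φ₁ φ₂ u₁ u₂ = f₂ x z y φ₂ φ₁ u₂ u₁)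
    (hF₂symm : ∀ x z φ₁ φ₂ u₁ u₂, F₂ x z φ₁ φ₂ u₁ u₂ = F₂ z x φ₂ φ₁ u₂ u₁)
    -- bounded measurable state, control, costate
    (φ : (Fin d → ℝ) → (Fin n → ℝ)) (u : (Fin d → ℝ) → (Fin m → ℝ))
    (ψ : (Fin d → ℝ) → ((Fin n → ℝ) →L[ℝ] ℝ))
    (hφ : Measurable φ) (hφbd : ∃ C, ∀ x, ‖φ x‖ ≤ C)
    (hu : Measurable u) (hubd : ∃ C, ∀ x, ‖u x‖ ≤ C)
    (hψ : StronglyMeasurable ψ) (hψbd : ∃ C, ∀ x, ‖ψ x‖ ≤ C)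
    -- bounded measurable variations
    (δφ : (Fin d → ℝ) → (Fin n → ℝ)) (δu : (Fin d → ℝ) → (Fin m → ℝ))
    (hδφ : Measurable δφ) (hδφbd : ∃ C, ∀ x, ‖δφ x‖ ≤ C)
    (hδu : Measurable δu) (hδubd : ∃ C, ∀ x, ‖δu x‖ ≤ C)
    -- the costate Hamiltonian equation ψ(x) = ∇_φ H(x) a.e. on G
    (hcostate : ∀ᵐ x ∂volume.restrict G,
      ψ x = fderiv ℝ (fun η => fredholmHamiltonian G f₁ f₂ F₁ F₂ φ u ψ x η (u x)) (φ x))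
    -- the linearized state equation a.e. on G
    (hlin : ∀ᵐ x ∂volume.restrict G,
      δφ x =
        (∫ y in G,
          (fderiv ℝ (fun η => f₁ x y η (u y)) (φ y) (δφ y) +
            fderiv ℝ (fun ν => f₁ x y (φ y) ν) (u y) (δu y))) +
        ∫ y in G, ∫ z in G,
          (fderiv ℝ (fun η => f₂ x y z η (φ z) (u y) (u z)) (φ y) (δφ y) +
            fderiv ℝ (fun ν => f₂ x y z (φ y) (φ z) ν (u z)) (u y) (δu y))) :
    -- conclusion: the first variation of the cost equals ∫_G ∇_u H(x) δu(x) dx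
    (∫ x in G,
      (fderiv ℝ (fun η => F₁ x η (u x)) (φ x) (δφ x) +
        fderiv ℝ (fun ν => F₁ x (φ x) ν) (u x) (δu x))) +
    (∫ x in G, ∫ z in G,
      (fderiv ℝ (fun η => F₂ x z η (φ z) (u x) (u z)) (φ x) (δφ x) +
        fderiv ℝ (fun ν => F₂ x z (φ x) (φ z) ν (u z)) (u x) (δu x))) =
    ∫ x in G,
      fderiv ℝ (fun ν => fredholmHamiltonian G f₁ f₂ F₁ F₂ φ u ψ x (φ x) ν) (u x) (δu x) :=
  fredholm_first_variation_formula_general d n m G hGfin f₁ f₂ F₁ F₂ hf₁meas hf₂meas hF₁meas hF₂meas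
    hf₁smooth hf₂smooth hF₁smooth hF₂smooth hf₁bd hf₂bd hF₁bd hF₂bd φ u ψ hφ hu hψ hψbd δφ δu hδφ
    hδφbd hδu hδubd hcostate hlin
end

section
/- Let G ⊆ ℝ^d be a bounded open set with Lebesgue measure |G| > 0, with closure Ḡ, let R₁ : Ḡ → ℝ^{m×m} and K : Ḡ×Ḡ → ℝ^{m×m} be continuous, and define the 2m×2m block matrix M(x₁,x₂) := [[R₁(x₁)/|G|, K(x₁,x₂)], [K(x₂,x₁), R₁(x₂)/|G|]]. If M(x₁,x₂) is positive definite for every (x₁,x₂) ∈ Ḡ×Ḡ (i.e. wᵀM(x₁,x₂)w > 0 for every nonzero w ∈ ℝ^{2m}), then the quadratic functional J_a(U) := ∫_G U(x)ᵀR₁(x)U(x) dx + ∫_G ∫_G U(x₁)ᵀK(x₁,x₂)U(x₂) dx₁ dx₂ is positive definite on L²(G,ℝ^m), i.e. J_a(U) > 0 for every U ∈ L²(G,ℝ^m) with U ≠ 0 in L². -/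
/-!
For `w = (U x₁, U x₂)` the quadratic form `wᵀ M(x₁, x₂) w` expands to
  `|G|⁻¹ U(x₁)ᵀ R₁(x₁) U(x₁) + U(x₁)ᵀ K(x₁, x₂) U(x₂)`
  `+ U(x₂)ᵀ K(x₂, x₁) U(x₁) + |G|⁻¹ U(x₂)ᵀ R₁(x₂) U(x₂)`,
so by Fubini its integral over `G × G` equals `2 J_a(U)`; the factor `|G|⁻¹` is exactly what
integrating out the free variable cancels. Pointwise positive definiteness makes this integrand
nonnegative, and positive wherever `U x₁ ≠ 0`, a set of positive product measure. Continuity on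
the compact set `Ḡ` bounds the kernels, which gives all the integrability needed.
-/

open MeasureTheory Set Matrix

theorem Matrix.sumElim_dotProduct_fromBlocks_mulVec_sumElim {n o R : Type*} [Fintype n]
    [Fintype o] [NonUnitalNonAssocSemiring R] (A : Matrix n n R) (B : Matrix n o R)
    (C : Matrix o n R) (D : Matrix o o R) (u : n → R) (v : o → R) :
    Sum.elim u v ⬝ᵥ (fromBlocks A B C D *ᵥ Sum.elim u v) =
      u ⬝ᵥ (A *ᵥ u) + u ⬝ᵥ (B *ᵥ v) + (v ⬝ᵥ (C *ᵥ u) + v ⬝ᵥ (D *ᵥ v)) := by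
  rw [fromBlocks_mulVec]
  simp [sumElim_dotProduct_sumElim, dotProduct_add]

theorem Matrix.dotProduct_mulVec_nonneg_of_pos {n R : Type*} [Fintype n] [Semiring R]
    [PartialOrder R] {A : Matrix n n R} (hA : ∀ w ≠ 0, 0 < w ⬝ᵥ (A *ᵥ w)) (w : n → R) :
    0 ≤ w ⬝ᵥ (A *ᵥ w) := by
  by_cases hw : w = 0
  · rw [hw, zero_dotProduct]
  · exact (hA w hw).le

section Integrability

variable {α n : Type*} [MeasurableSpace α] [TopologicalSpace α] [OpensMeasurableSpace α]
  [T2Space α] [SecondCountableTopologyEither α ℝ] [Fintype n] {μ : Measure α} {s : Set α}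

theorem MeasureTheory.Integrable.continuousOn_mul_of_ae_mem {k f : α → ℝ} (hs : IsCompact s)
    (hμs : ∀ᵐ x ∂μ, x ∈ s) (hk : ContinuousOn k s) (hf : Integrable f μ) :
    Integrable (fun x => k x * f x) μ := by
  have hrestrict : μ.restrict s = μ := Measure.restrict_eq_self_of_ae_mem hμs
  have h := IntegrableOn.continuousOn_mul (μ := μ) hk (by rwa [IntegrableOn, hrestrict]) hs
  rwa [IntegrableOn, hrestrict] at h

theorem integrable_dotProduct_mulVec_of_continuousOn {u v : α → n → ℝ}
    {A : α → Matrix n n ℝ} (hs : IsCompact s) (hμs : ∀ᵐ x ∂μ, x ∈ s)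
    (hA : ∀ i j, ContinuousOn (fun x => A x i j) s)
    (huv : ∀ i j, Integrable (fun x => u x i * v x j) μ) :
    Integrable (fun x => u x ⬝ᵥ (A x *ᵥ v x)) μ := by
  have hsum : (fun x => u x ⬝ᵥ (A x *ᵥ v x)) =
      fun x => ∑ i, ∑ j, A x i j * (u x i * v x j) := by
    funext x
    simp only [dotProduct, mulVec, Finset.mul_sum]
    exact Finset.sum_congr rfl fun i _ => Finset.sum_congr rfl fun j _ => by ring
  rw [hsum]
  exact integrable_finsetSum _ fun i _ => integrable_finsetSum _ fun j _ =>
    (huv i j).continuousOn_mul_of_ae_mem hs hμs (hA i j)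

end Integrability

section Symmetrization

variable {α : Type*} [MeasurableSpace α] {μ : Measure α} [IsFiniteMeasure μ]

/-- For `g x = U(x)ᵀ R(x) U(x)` and `F (x, y) = U(x)ᵀ K(x, y) U(y)` this is `wᵀ M(x, y) w` with
`w = (U x, U y)`. -/
noncomputable def symmetrizedForm (μ : Measure α) (g : α → ℝ) (F : α × α → ℝ) (p : α × α) : ℝ :=
  (μ.real univ)⁻¹ * g p.1 + F p + (F p.swap + (μ.real univ)⁻¹ * g p.2)

theorem integrable_symmetrizedForm {g : α → ℝ} {F : α × α → ℝ} (hg : Integrable g μ)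
    (hF : Integrable F (μ.prod μ)) : Integrable (symmetrizedForm μ g F) (μ.prod μ) :=
  (((hg.const_mul _).comp_fst μ).add hF).add (hF.swap.add ((hg.const_mul _).comp_snd μ))

theorem integral_symmetrizedForm [NeZero μ] {g : α → ℝ} {F : α × α → ℝ} (hg : Integrable g μ)
    (hF : Integrable F (μ.prod μ)) :
    ∫ p, symmetrizedForm μ g F p ∂μ.prod μ = 2 * ((∫ x, g x ∂μ) + ∫ x, ∫ y, F (x, y) ∂μ ∂μ) := by
  have hc : μ.real univ ≠ 0 := by simp [measureReal_def, ENNReal.toReal_eq_zero_iff, NeZero.ne μ]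
  have hg' : Integrable (fun x => (μ.real univ)⁻¹ * g x) μ := hg.const_mul _
  have hg₁ : ∫ p : α × α, (μ.real univ)⁻¹ * g p.1 ∂μ.prod μ = ∫ x, g x ∂μ := by
    rw [integral_fun_fst (fun x => (μ.real univ)⁻¹ * g x), integral_const_mul, smul_eq_mul,
      mul_inv_cancel_left₀ hc]
  have hg₂ : ∫ p : α × α, (μ.real univ)⁻¹ * g p.2 ∂μ.prod μ = ∫ x, g x ∂μ := by
    rw [integral_fun_snd (fun x => (μ.real univ)⁻¹ * g x), integral_const_mul, smul_eq_mul,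
      mul_inv_cancel_left₀ hc]
  have hFs : Integrable (fun p => F p.swap) (μ.prod μ) := hF.swap
  have hFswap : ∫ p, F p.swap ∂μ.prod μ = ∫ p, F p ∂μ.prod μ := integral_prod_swap F
  unfold symmetrizedForm
  rw [integral_add ((hg'.comp_fst μ).fun_add hF) (hFs.fun_add (hg'.comp_snd μ)),
    integral_add (hg'.comp_fst μ) hF, integral_add hFs (hg'.comp_snd μ), hg₁, hg₂, hFswap,
    integral_prod F hF]
  ring

end Symmetrization

theorem integral_prod_pos_of_ae_pos_of_fst_mem {α β : Type*} [MeasurableSpace α]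
    [MeasurableSpace β] {μ : Measure α} {ν : Measure β} [SFinite ν] {f : α × β → ℝ}
    {s : Set α} (hf : Integrable f (μ.prod ν)) (hf₀ : 0 ≤ᵐ[μ.prod ν] f)
    (hfs : ∀ᵐ p ∂μ.prod ν, p.1 ∈ s → 0 < f p) (hs : μ s ≠ 0) (hν : ν ≠ 0) :
    0 < ∫ p, f p ∂μ.prod ν := by
  rw [integral_pos_iff_support_of_nonneg_ae hf₀ hf]
  have hsupp : s ×ˢ univ ≤ᵐ[μ.prod ν] Function.support f :=
    hfs.mono fun p hp hps => (hp hps.1).ne'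
  calc 0 < μ s * ν univ := ENNReal.mul_pos hs (by simpa using hν)
    _ = μ.prod ν (s ×ˢ univ) := (Measure.prod_prod s univ).symm
    _ ≤ μ.prod ν (Function.support f) := measure_mono_ae hsupp

theorem quadratic_functional_pos_of_block_kernel_pos {α n : Type*} [MeasurableSpace α]
    [TopologicalSpace α] [OpensMeasurableSpace α] [T2Space α] [SecondCountableTopology α]
    [Fintype n] {μ : Measure α} [IsFiniteMeasure μ] [NeZero μ] {s : Set α} (hs : IsCompact s)
    (hμs : ∀ᵐ x ∂μ, x ∈ s) {R : α → Matrix n n ℝ} {K : α → α → Matrix n n ℝ}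
    (hR : ∀ i j, ContinuousOn (fun x => R x i j) s)
    (hK : ∀ i j, ContinuousOn (fun p : α × α => K p.1 p.2 i j) (s ×ˢ s))
    (hM : ∀ x ∈ s, ∀ y ∈ s, ∀ w ≠ 0, 0 < w ⬝ᵥ
      (fromBlocks ((μ.real univ)⁻¹ • R x) (K x y) (K y x) ((μ.real univ)⁻¹ • R y) *ᵥ w))
    {U : α → n → ℝ} (hU : MemLp U 2 μ) (hU₀ : ¬ U =ᵐ[μ] 0) :
    0 < (∫ x, U x ⬝ᵥ (R x *ᵥ U x) ∂μ) + ∫ x, ∫ y, U x ⬝ᵥ (K x y *ᵥ U y) ∂μ ∂μ := by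
  have hμss : ∀ᵐ p ∂μ.prod μ, p ∈ s ×ˢ s :=
    (Measure.quasiMeasurePreserving_fst.ae hμs).and (Measure.quasiMeasurePreserving_snd.ae hμs)
  have hUi : ∀ i, MemLp (fun x => U x i) 2 μ := hU.eval
  set g : α → ℝ := fun x => U x ⬝ᵥ (R x *ᵥ U x)
  set F : α × α → ℝ := fun p => U p.1 ⬝ᵥ (K p.1 p.2 *ᵥ U p.2)
  have hg : Integrable g μ := integrable_dotProduct_mulVec_of_continuousOn hs hμs hR
    fun i j => (hUi i).integrable_mul (hUi j)
  have hF : Integrable F (μ.prod μ) :=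
    integrable_dotProduct_mulVec_of_continuousOn (hs.prod hs) hμss hK
      fun i j => ((hUi i).integrable one_le_two).mul_prod ((hUi j).integrable one_le_two)
  have hform : ∀ p : α × α, symmetrizedForm μ g F p = Sum.elim (U p.1) (U p.2) ⬝ᵥ
      (fromBlocks ((μ.real univ)⁻¹ • R p.1) (K p.1 p.2) (K p.2 p.1) ((μ.real univ)⁻¹ • R p.2) *ᵥ
        Sum.elim (U p.1) (U p.2)) := fun p => by
    rw [sumElim_dotProduct_fromBlocks_mulVec_sumElim]
    simp only [smul_mulVec, dotProduct_smul, smul_eq_mul, symmetrizedForm, g, F]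
    rfl
  have hnonneg : 0 ≤ᵐ[μ.prod μ] symmetrizedForm μ g F :=
    hμss.mono fun p hp => hform p ▸ dotProduct_mulVec_nonneg_of_pos (hM _ hp.1 _ hp.2) _
  have hpos_of_ne : ∀ᵐ p ∂μ.prod μ, p.1 ∈ Function.support U → 0 < symmetrizedForm μ g F p :=
    hμss.mono fun p hp hU₁ => hform p ▸ hM _ hp.1 _ hp.2 _ fun h =>
      hU₁ (Sum.elim_eq_iff.1 (h.trans Sum.elim_zero_zero.symm)).1
  have hpos := integral_prod_pos_of_ae_pos_of_fst_mem (integrable_symmetrizedForm hg hF)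
    hnonneg hpos_of_ne ((Measure.measure_support_eq_zero_iff μ).not.2 hU₀) (NeZero.ne μ)
  rw [integral_symmetrizedForm hg hF] at hpos
  linarith

theorem block_kernel_posdef_implies_quadratic_posdef_general
    (d m : ℕ) (G : Set (Fin d → ℝ))
    (hGbd : Bornology.IsBounded G) (hGpos : 0 < volume G)
    (R₁ : (Fin d → ℝ) → Matrix (Fin m) (Fin m) ℝ)
    (K : (Fin d → ℝ) → (Fin d → ℝ) → Matrix (Fin m) (Fin m) ℝ)
    (hR₁cont : ∀ i j, ContinuousOn (fun x => R₁ x i j) (closure G))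
    (hKcont : ∀ i j, ContinuousOn (fun p : (Fin d → ℝ) × (Fin d → ℝ) => K p.1 p.2 i j)
      (closure G ×ˢ closure G))
    (M : (Fin d → ℝ) → (Fin d → ℝ) → Matrix (Fin m ⊕ Fin m) (Fin m ⊕ Fin m) ℝ)
    (hM : ∀ x₁ x₂, M x₁ x₂ =
      Matrix.fromBlocks (((volume G).toReal)⁻¹ • R₁ x₁) (K x₁ x₂)
        (K x₂ x₁) (((volume G).toReal)⁻¹ • R₁ x₂))
    (hMposdef : ∀ x₁ ∈ closure G, ∀ x₂ ∈ closure G,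
      ∀ w : Fin m ⊕ Fin m → ℝ, w ≠ 0 → 0 < w ⬝ᵥ (M x₁ x₂ *ᵥ w))
    (U : (Fin d → ℝ) → Fin m → ℝ) (hU : MemLp U 2 (volume.restrict G))
    (hUne : ¬ (U =ᵐ[volume.restrict G] 0)) :
    0 < (∫ x in G, U x ⬝ᵥ (R₁ x *ᵥ U x)) +
      ∫ x₁ in G, ∫ x₂ in G, U x₁ ⬝ᵥ (K x₁ x₂ *ᵥ U x₂) := by
  have : IsFiniteMeasure (volume.restrict G) :=
    isFiniteMeasure_restrict.2 hGbd.measure_lt_top.ne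
  have : NeZero (volume.restrict G) := ⟨by simpa using hGpos.ne'⟩
  have hvol : (volume.restrict G).real univ = (volume G).toReal := by simp [measureReal_def]
  have hGcl : ∀ᵐ x ∂volume.restrict G, x ∈ closure G :=
    (ae_restrict_iff isClosed_closure.measurableSet).2 (.of_forall fun _ hx => subset_closure hx)
  refine quadratic_functional_pos_of_block_kernel_pos hGbd.isCompact_closure hGcl hR₁cont hKcont
    ?_ hU hUne
  intro x₁ hx₁ x₂ hx₂ w hw
  rw [hvol, ← hM]
  exact hMposdef x₁ hx₁ x₂ hx₂ w hw

/-- Sufficient condition at the end of Section 5: pointwise positive definiteness of the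
block kernel `M` on `closure G × closure G` implies positive definiteness of the quadratic
functional `J_a` on `L²(G, ℝ^m)`. -/
theorem block_kernel_posdef_implies_quadratic_posdef
    (d m : ℕ) (G : Set (Fin d → ℝ)) (hGopen : IsOpen G)
    (hGbd : Bornology.IsBounded G) (hGpos : 0 < volume G)
    (R₁ : (Fin d → ℝ) → Matrix (Fin m) (Fin m) ℝ)
    (K : (Fin d → ℝ) → (Fin d → ℝ) → Matrix (Fin m) (Fin m) ℝ)
    (hR₁cont : ∀ i j, ContinuousOn (fun x => R₁ x i j) (closure G))
    (hKcont : ∀ i j, ContinuousOn (fun p : (Fin d → ℝ) × (Fin d → ℝ) => K p.1 p.2 i j)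
      (closure G ×ˢ closure G))
    (M : (Fin d → ℝ) → (Fin d → ℝ) → Matrix (Fin m ⊕ Fin m) (Fin m ⊕ Fin m) ℝ)
    (hM : ∀ x₁ x₂, M x₁ x₂ =
      Matrix.fromBlocks (((volume G).toReal)⁻¹ • R₁ x₁) (K x₁ x₂)
        (K x₂ x₁) (((volume G).toReal)⁻¹ • R₁ x₂))
    (hMposdef : ∀ x₁ ∈ closure G, ∀ x₂ ∈ closure G,
      ∀ w : Fin m ⊕ Fin m → ℝ, w ≠ 0 → 0 < w ⬝ᵥ (M x₁ x₂ *ᵥ w))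
    (U : (Fin d → ℝ) → Fin m → ℝ) (hU : MemLp U 2 (volume.restrict G))
    (hUne : ¬ (U =ᵐ[volume.restrict G] 0)) :
    0 < (∫ x in G, U x ⬝ᵥ (R₁ x *ᵥ U x)) +
      ∫ x₁ in G, ∫ x₂ in G, U x₁ ⬝ᵥ (K x₁ x₂ *ᵥ U x₂) :=
  block_kernel_posdef_implies_quadratic_posdef_general d m G hGbd hGpos R₁ K hR₁cont hKcont M hM
    hMposdef U hU hUne
end

section
/- (Volterra first-order variation formula (7.7).) Suppose ψ satisfies the costate Hamiltonian equation ψ(t) = ∇_yH(t) for a.e. t ∈ [0,T], i.e. ψ(t) = ω[∇_yf₁(T,t,y(t),u(t)) + ∫₀ᵀ ∇_{y(t)}f₂(T,t,σ,y(t),y(σ),u(t),u(σ)) dσ] + ∇_yF₁(t,y(t),u(t)) + ∫₀ᵀ ∇_{y(t)}F₂(t,σ,y(t),y(σ),u(t),u(σ)) dσ + ∫ₜᵀ ψ(s)∇_yf₁(s,t,y(t),u(t)) ds + ∫ₜᵀ ∫₀ˢ ψ(s)∇_{y(t)}f₂(s,t,σ,y(t),y(σ),u(t),u(σ)) dσ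 ds, and suppose bounded measurable variations δy : [0,T] → ℝ^n, δu : [0,T] → ℝ^m satisfy the linearized state equation δy(t) = ∫₀ᵗ [∇_yf₁(t,s,y(s),u(s))δy(s) + ∇_uf₁(t,s,y(s),u(s))δu(s)] ds + ∫₀ᵗ ∫₀ᵗ [∇_{y(s)}f₂(t,s,σ,y(s),y(σ),u(s),u(σ))δy(s) + ∇_{u(s)}f₂(t,s,σ,y(s),y(σ),u(s),u(σ))δu(s)] dσ ds for every t ∈ [0,T], including t = T. Then δJ := ∇_YF₀(T,y(T))δy(T) + ∫₀ᵀ [∇_yF₁(t,y(t),u(t))δy(t) + ∇_uF₁(t,y(t),u(t))δu(t)] dt + ∫₀ᵀ ∫₀ᵀ [∇_{y(t)}F₂(t,σ,y(t),y(σ),u(t),u(σ))δy(t) + ∇_{u(t)}F₂(t,σ,y(t),y(σ),u(t),u(σ))δu(t)] dσ dt equals ∫₀ᵀ (∇_uH(t)) δu(t) dt. -/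
/-!
Differentiating under the integral sign, the derivative of the Hamiltonian at `(y t, u t)` in
the direction `δz = (δy t, δu t)` is `ω (A T t δz) + B t δz + ∫ₜᵀ ψ s (A s t δz) ds`, where
`A s t` is the derivative of the integrand of the state equation and `B t` that of the running
cost. Integrated over `[0, T]`, the first term is `ω (δy T)` by the linearized state equation at
`T`, and Fubini on the triangle `{t < s}` turns the last one into `∫₀ᵀ ψ s (δy s) ds` by the
linearized state equation at every `s`. By the costate equation this is the integral of the
`δy`-part of the derivative, so the `δu`-part, `∫₀ᵀ ∇ᵤH δu`, is `ω (δy T) + ∫₀ᵀ B t δz dt = δJ`.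
-/

open MeasureTheory Set

/-- The Hamiltonian (7.5) of the controlled double Volterra problem. -/
noncomputable def volterraHamiltonian {n m : ℕ} (T : ℝ)
    (f₁ : ℝ → ℝ → (Fin n → ℝ) → (Fin m → ℝ) → (Fin n → ℝ))
    (f₂ : ℝ → ℝ → ℝ → (Fin n → ℝ) → (Fin n → ℝ) → (Fin m → ℝ) → (Fin m → ℝ) → (Fin n → ℝ))
    (F₀ : ℝ → (Fin n → ℝ) → ℝ)
    (F₁ : ℝ → (Fin n → ℝ) → (Fin m → ℝ) → ℝ)
    (F₂ : ℝ → ℝ → (Fin n → ℝ) → (Fin n → ℝ) → (Fin m → ℝ) → (Fin m → ℝ) → ℝ)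
    (y : ℝ → Fin n → ℝ) (u : ℝ → Fin m → ℝ)
    (ψ : ℝ → ((Fin n → ℝ) →L[ℝ] ℝ)) (ω : (Fin n → ℝ) →L[ℝ] ℝ)
    (t : ℝ) (η : Fin n → ℝ) (ν : Fin m → ℝ) : ℝ :=
  ω (f₁ T t η ν + ∫ σ in (0:ℝ)..T, f₂ T t σ η (y σ) ν (u σ)) +
    F₀ T (y T) + F₁ t η ν + (∫ σ in (0:ℝ)..T, F₂ t σ η (y σ) ν (u σ)) +
    (∫ s in t..T, ψ s (f₁ s t η ν)) +
    ∫ s in t..T, ∫ σ in (0:ℝ)..s, ψ s (f₂ s t σ η (y σ) ν (u σ))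

open Filter Function

section Measurability

variable {α : Type*} [MeasurableSpace α]
  {V W : Type*} [NormedAddCommGroup V] [NormedSpace ℝ V]
  [NormedAddCommGroup W] [NormedSpace ℝ W] [MeasurableSpace W] [BorelSpace W]

theorem measurable_continuousLinearMap_of_apply [FiniteDimensional ℝ V] [FiniteDimensional ℝ W]
    {f : α → V →L[ℝ] W} (h : ∀ v, Measurable fun a => f a v) : Measurable f := by
  let b := Module.finBasis ℝ V
  let e : (Fin _ → W) →ₗ[ℝ] V →L[ℝ] W :=
    ((b.constr ℝ).trans LinearMap.toContinuousLinearMap).toLinearMap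
  have hf : f = fun a => e fun i => f a (b i) := funext fun a =>
    ContinuousLinearMap.coe_injective (b.ext fun i => by simp [e])
  rw [hf]
  exact e.continuous_of_finiteDimensional.measurable.comp
    (measurable_pi_lambda _ fun i => h (b i))

theorem Measurable.clm_apply [MeasurableSpace V] [BorelSpace V]
    [SecondCountableTopologyEither (V →L[ℝ] W) V]
    {f : α → V →L[ℝ] W} {w : α → V} (hf : Measurable f) (hw : Measurable w) :
    Measurable fun a => f a (w a) :=
  ContinuousLinearMap.measurable_apply₂.comp (hf.prodMk hw)

/-- Derivatives are limits of difference quotients, so they inherit joint measurability. -/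
theorem measurable_fderiv_of_measurable_uncurry [FiniteDimensional ℝ V] [FiniteDimensional ℝ W]
    [MeasurableSpace V] [BorelSpace V]
    {g : α → V → W} {x : α → V} (hg : Measurable (uncurry g)) (hx : Measurable x)
    (hdiff : ∀ a, Differentiable ℝ (g a)) : Measurable fun a => fderiv ℝ (g a) (x a) := by
  refine measurable_continuousLinearMap_of_apply fun v => ?_
  have hk : Tendsto (fun k : ℕ => ‖(k : ℝ)‖) atTop atTop := by
    simpa using tendsto_natCast_atTop_atTop
  refine measurable_of_tendsto_metrizable (fun k : ℕ => ?_)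
    (tendsto_pi_nhds.2 fun a => ((hdiff a (x a)).hasFDerivAt).lim v hk)
  exact ((hg.comp (measurable_id.prodMk (hx.add_const _))).sub
    (hg.comp (measurable_id.prodMk hx))).const_smul _

end Measurability

theorem stronglyMeasurable_intervalIntegral_of_uncurry {α E : Type*} [MeasurableSpace α]
    [NormedAddCommGroup E] [NormedSpace ℝ E] {F : α → ℝ → E}
    (hF : StronglyMeasurable (uncurry F)) (c : ℝ) {b : α → ℝ} (hb : Measurable b) :
    StronglyMeasurable fun a => ∫ σ in c..b a, F a σ := by
  have hIoc : ∀ {l r : α → ℝ}, Measurable l → Measurable r →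
      StronglyMeasurable fun a => ∫ σ in Ioc (l a) (r a), F a σ := by
    intro l r hl hr
    have hset : MeasurableSet {q : α × ℝ | q.2 ∈ Ioc (l q.1) (r q.1)} :=
      (measurableSet_lt (hl.comp measurable_fst) measurable_snd).inter
        (measurableSet_le measurable_snd (hr.comp measurable_fst))
    simp_rw [← integral_indicator measurableSet_Ioc]
    exact (hF.indicator hset).integral_prod_right'
  simp_rw [intervalIntegral]
  exact (hIoc measurable_const hb).sub (hIoc hb measurable_const)

theorem intervalIntegrable_of_norm_le {E : Type*} [NormedAddCommGroup E] {f : ℝ → E}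
    {c d C : ℝ} (hf : AEStronglyMeasurable f) (hb : ∀ σ ∈ uIcc c d, ‖f σ‖ ≤ C) :
    IntervalIntegrable f volume c d :=
  (intervalIntegrable_const (c := C)).mono_fun' hf.restrict
    (ae_restrict_of_forall_mem measurableSet_uIoc fun σ hσ => hb σ (uIoc_subset_uIcc hσ))

theorem integrableOn_clm_apply_of_bounded {α V W : Type*} [MeasurableSpace α]
    [NormedAddCommGroup V] [NormedSpace ℝ V] [MeasurableSpace V] [BorelSpace V]
    [NormedAddCommGroup W] [NormedSpace ℝ W] [MeasurableSpace W] [BorelSpace W]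
    [SecondCountableTopologyEither (V →L[ℝ] W) V] [SecondCountableTopology W]
    {μ : Measure α} {s : Set α} (hs : MeasurableSet s) (hμs : μ s ≠ ⊤) {L : α → V →L[ℝ] W}
    {w : α → V} (hL : Measurable L) (hw : Measurable w)
    {C C' : ℝ} (hLb : ∀ a ∈ s, ‖L a‖ ≤ C) (hwb : ∀ a ∈ s, ‖w a‖ ≤ C') :
    IntegrableOn (fun a => L a (w a)) s μ :=
  Measure.integrableOn_of_bounded hμs (hL.clm_apply hw).aestronglyMeasurable
    (ae_restrict_of_forall_mem hs fun a ha =>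
      ContinuousLinearMap.le_of_opNorm_le_of_le _ (hLb a ha) (hwb a ha))

section BoundedC1

variable {α β : Type*} [MeasurableSpace α] [MeasurableSpace β]
  {X Y W W' : Type*}
  [NormedAddCommGroup X] [NormedSpace ℝ X] [MeasurableSpace X]
  [NormedAddCommGroup Y] [NormedSpace ℝ Y] [MeasurableSpace Y]
  [NormedAddCommGroup W] [NormedSpace ℝ W] [MeasurableSpace W]
  [NormedAddCommGroup W'] [NormedSpace ℝ W'] [MeasurableSpace W']

structure BoundedC1On (S : Set α) (g : α → X → W) : Prop where
  measurable : Measurable (uncurry g)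
  differentiable : ∀ a, Differentiable ℝ (g a)
  bounded : ∃ C, ∀ a ∈ S, ∀ x, ‖g a x‖ ≤ C ∧ ‖fderiv ℝ (g a) x‖ ≤ C

namespace BoundedC1On

variable {S : Set α} {g h : α → X → W}

theorem of_norm_iteratedFDeriv_le (hm : Measurable (uncurry g))
    (hd : ∀ a, Differentiable ℝ (g a))
    (hb : ∃ C, ∀ a x, ∀ k : ℕ, k ≤ 1 → ‖iteratedFDeriv ℝ k (g a) x‖ ≤ C) :
    BoundedC1On univ g :=
  ⟨hm, hd, hb.imp fun _ hC a _ x =>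
    ⟨by simpa using hC a x 0 zero_le_one, by simpa using hC a x 1 le_rfl⟩⟩

theorem measurable_fderiv [FiniteDimensional ℝ X] [BorelSpace X] [FiniteDimensional ℝ W]
    [BorelSpace W] (hg : BoundedC1On S g) {x : α → X} (hx : Measurable x) :
    Measurable fun a => fderiv ℝ (g a) (x a) :=
  measurable_fderiv_of_measurable_uncurry hg.measurable hx hg.differentiable

theorem mono (hg : BoundedC1On S g) {S' : Set α} (h : S' ⊆ S) : BoundedC1On S' g := by
  obtain ⟨C, hC⟩ := hg.bounded
  exact ⟨hg.measurable, hg.differentiable, C, fun a ha => hC a (h ha)⟩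

theorem add [BorelSpace W] [SecondCountableTopology W] (hg : BoundedC1On S g)
    (hh : BoundedC1On S h) : BoundedC1On S (g + h) := by
  obtain ⟨C, hC⟩ := hg.bounded
  obtain ⟨C', hC'⟩ := hh.bounded
  refine ⟨hg.measurable.add hh.measurable, fun a => hg.differentiable a |>.add
    (hh.differentiable a), C + C', fun a ha x => ⟨?_, ?_⟩⟩
  · exact (norm_add_le _ _).trans (add_le_add (hC a ha x).1 (hC' a ha x).1)
  · rw [Pi.add_apply, fderiv_add (hg.differentiable a x) (hh.differentiable a x)]
    exact (norm_add_le _ _).trans (add_le_add (hC a ha x).2 (hC' a ha x).2)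

theorem comp_measurable (hg : BoundedC1On S g) {φ : β → α} (hφ : Measurable φ) {S' : Set β}
    (hS : MapsTo φ S' S) : BoundedC1On S' fun b => g (φ b) := by
  obtain ⟨C, hC⟩ := hg.bounded
  exact ⟨hg.measurable.comp (hφ.prodMap measurable_id), fun b => hg.differentiable (φ b), C,
    fun b hb => hC (φ b) (hS hb)⟩

theorem comp_lipschitzWith {g : α → Y → W} (hg : BoundedC1On S g) {e : α → X → Y}
    (he : Measurable (uncurry e)) (hed : ∀ a, Differentiable ℝ (e a)) {K : NNReal}
    (hK : ∀ a, LipschitzWith K (e a)) : BoundedC1On S fun a x => g a (e a x) := by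
  obtain ⟨C, hC⟩ := hg.bounded
  refine ⟨hg.measurable.comp (measurable_fst.prodMk he), fun a => (hg.differentiable a).comp
    (hed a), max C (C * K), fun a ha x => ⟨(hC a ha _).1.trans (le_max_left _ _), ?_⟩⟩
  rw [show (fun x => g a (e a x)) = g a ∘ e a from rfl,
    fderiv_comp x (hg.differentiable a _) (hed a x)]
  refine (ContinuousLinearMap.opNorm_comp_le _ _).trans (le_trans ?_ (le_max_right _ _))
  exact mul_le_mul (hC a ha _).2 (norm_fderiv_le_of_lipschitz ℝ (hK a)) (norm_nonneg _)
    ((norm_nonneg _).trans (hC a ha (e a x)).2)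

theorem comp_insert {E₁ E₂ U₁ U₂ : Type*}
    [NormedAddCommGroup E₁] [NormedSpace ℝ E₁] [MeasurableSpace E₁]
    [NormedAddCommGroup E₂] [NormedSpace ℝ E₂] [MeasurableSpace E₂]
    [NormedAddCommGroup U₁] [NormedSpace ℝ U₁] [MeasurableSpace U₁]
    [NormedAddCommGroup U₂] [NormedSpace ℝ U₂] [MeasurableSpace U₂]
    {Φ : α → E₁ × E₂ × U₁ × U₂ → W} (hΦ : BoundedC1On S Φ) {y : α → E₂} {u : α → U₂}
    (hy : Measurable y) (hu : Measurable u) :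
    BoundedC1On S fun a (p : E₁ × U₁) => Φ a (p.1, y a, p.2, u a) :=
  hΦ.comp_lipschitzWith (K := 1) (by fun_prop) (fun _ => by fun_prop) fun a =>
    (LipschitzWith.prod_fst.prodMk ((LipschitzWith.const (y a)).prodMk
      (LipschitzWith.prod_snd.prodMk (LipschitzWith.const (u a))))).weaken (by simp)

theorem clm_apply [BorelSpace W] [SecondCountableTopologyEither (W →L[ℝ] W') W] [BorelSpace W']
    (hg : BoundedC1On S g) {ψ : α → W →L[ℝ] W'} (hψ : Measurable ψ)
    (hψb : ∃ C, ∀ a, ‖ψ a‖ ≤ C) : BoundedC1On S fun a x => ψ a (g a x) := by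
  obtain ⟨C, hC⟩ := hg.bounded
  obtain ⟨Cψ, hCψ⟩ := hψb
  have hfd : ∀ a x, fderiv ℝ (fun x => ψ a (g a x)) x = (ψ a).comp (fderiv ℝ (g a) x) :=
    fun a x => ((ψ a).hasFDerivAt.comp x (hg.differentiable a x).hasFDerivAt).fderiv
  have hCψ0 : ∀ a, 0 ≤ Cψ := fun a => (norm_nonneg _).trans (hCψ a)
  refine ⟨(hψ.comp measurable_fst).clm_apply hg.measurable, fun a => (ψ a).differentiable.comp
    (hg.differentiable a), Cψ * C, fun a ha x => ⟨?_, ?_⟩⟩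
  · exact ((ψ a).le_opNorm _).trans (mul_le_mul (hCψ a) (hC a ha x).1 (norm_nonneg _) (hCψ0 a))
  · rw [hfd]
    exact (ContinuousLinearMap.opNorm_comp_le _ _).trans
      (mul_le_mul (hCψ a) (hC a ha x).2 (norm_nonneg _) (hCψ0 a))

theorem clm_apply_slice [BorelSpace W] [SecondCountableTopologyEither (W →L[ℝ] W') W]
    [BorelSpace W'] {a : ℝ × ℝ → X → W} {ψ : ℝ → W →L[ℝ] W'} {t T : ℝ}
    (ha : BoundedC1On {q : ℝ × ℝ | q.1 ∈ Icc 0 T} a) (hψ : Measurable ψ)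
    (hψb : ∃ C, ∀ s, ‖ψ s‖ ≤ C) (ht : t ∈ Icc 0 T) :
    BoundedC1On (uIcc t T) fun s p => ψ s (a (s, t) p) :=
  (ha.clm_apply (hψ.comp measurable_fst) (hψb.imp fun _ hC q => hC q.1)).comp_measurable
    measurable_prodMk_right fun _ hs => uIcc_subset_Icc ht ⟨ht.1.trans ht.2, le_rfl⟩ hs

theorem intervalIntegrable [BorelSpace W] [SecondCountableTopology W] {c d : ℝ} {g : ℝ → X → W}
    (hg : BoundedC1On (uIcc c d) g) (x : X) :
    IntervalIntegrable (fun σ => g σ x) volume c d := by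
  obtain ⟨C, hC⟩ := hg.bounded
  exact intervalIntegrable_of_norm_le
    (hg.measurable.comp (measurable_id.prodMk measurable_const)).aestronglyMeasurable
    fun σ hσ => (hC σ hσ x).1

end BoundedC1On

end BoundedC1

section BoundedC1Integral

variable {α : Type*} [MeasurableSpace α] {X W : Type*}
  [NormedAddCommGroup X] [NormedSpace ℝ X] [FiniteDimensional ℝ X]
  [MeasurableSpace X] [BorelSpace X]
  [NormedAddCommGroup W] [NormedSpace ℝ W] [FiniteDimensional ℝ W]
  [MeasurableSpace W] [BorelSpace W]

namespace BoundedC1On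

variable {c d : ℝ} {g : ℝ → X → W}

theorem intervalIntegrable_fderiv (hg : BoundedC1On (uIcc c d) g) {x : ℝ → X}
    (hx : Measurable x) : IntervalIntegrable (fun σ => fderiv ℝ (g σ) (x σ)) volume c d := by
  obtain ⟨C, hC⟩ := hg.bounded
  exact intervalIntegrable_of_norm_le (hg.measurable_fderiv hx).aestronglyMeasurable
    fun σ hσ => (hC σ hσ _).2

theorem hasFDerivAt_intervalIntegral (hg : BoundedC1On (uIcc c d) g) (x₀ : X) :
    HasFDerivAt (fun x => ∫ σ in c..d, g σ x) (∫ σ in c..d, fderiv ℝ (g σ) x₀) x₀ := by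
  obtain ⟨C, hC⟩ := hg.bounded
  have hmeas : ∀ x, Measurable fun σ => g σ x := fun x =>
    hg.measurable.comp (measurable_id.prodMk measurable_const)
  refine intervalIntegral.hasFDerivAt_integral_of_dominated_of_fderiv_le (bound := fun _ => C)
    univ_mem (Eventually.of_forall fun x => (hmeas x).aestronglyMeasurable)
    (intervalIntegrable_of_norm_le (hmeas x₀).aestronglyMeasurable fun σ hσ => (hC σ hσ x₀).1)
    (hg.measurable_fderiv measurable_const).aestronglyMeasurable.restrict
    (Eventually.of_forall fun σ hσ x _ => (hC σ (uIoc_subset_uIcc hσ) x).2)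
    intervalIntegrable_const
    (Eventually.of_forall fun σ _ x _ => (hg.differentiable σ x).hasFDerivAt)

theorem fderiv_intervalIntegral_apply (hg : BoundedC1On (uIcc c d) g) (x₀ v : X) :
    fderiv ℝ (fun x => ∫ σ in c..d, g σ x) x₀ v = ∫ σ in c..d, fderiv ℝ (g σ) x₀ v := by
  rw [(hg.hasFDerivAt_intervalIntegral x₀).fderiv,
    ContinuousLinearMap.intervalIntegral_apply (hg.intervalIntegrable_fderiv measurable_const)]

theorem intervalIntegral {g : α × ℝ → X → W} (hg : BoundedC1On univ g) (c : ℝ) {b : α → ℝ}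
    (hb : Measurable b) {S : Set α} (hS : ∃ R, ∀ a ∈ S, |b a - c| ≤ R) :
    BoundedC1On S fun a x => ∫ σ in c..b a, g (a, σ) x := by
  obtain ⟨C, hC⟩ := hg.bounded
  obtain ⟨R, hR⟩ := hS
  have hslice : ∀ a, BoundedC1On (uIcc c (b a)) fun σ => g (a, σ) := fun a =>
    hg.comp_measurable measurable_prodMk_left (mapsTo_univ _ _)
  refine ⟨?_, fun a x => (hslice a |>.hasFDerivAt_intervalIntegral x).differentiableAt,
    C * R, fun a ha x => ?_⟩
  · exact (stronglyMeasurable_intervalIntegral_of_uncurry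
      (F := fun (q : α × X) σ => g (q.1, σ) q.2) (hg.measurable.comp
        ((measurable_fst.fst.prodMk measurable_snd).prodMk measurable_fst.snd)).stronglyMeasurable
      c (hb.comp measurable_fst)).measurable
  · have hCR :=
      mul_le_mul_of_nonneg_left (hR a ha) ((norm_nonneg _).trans (hC (a, c) trivial x).1)
    rw [(hslice a |>.hasFDerivAt_intervalIntegral x).fderiv]
    exact ⟨(intervalIntegral.norm_integral_le_of_norm_le_const fun σ _ =>
        (hC (a, σ) trivial x).1).trans hCR,
      (intervalIntegral.norm_integral_le_of_norm_le_const fun σ _ =>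
        (hC (a, σ) trivial x).2).trans hCR⟩

theorem fderiv_add_intervalIntegral_apply {g : α → X → W} {h : α × ℝ → X → W}
    (hg : BoundedC1On univ g) (hh : BoundedC1On univ h) (a : α) (c d : ℝ) (x v : X) :
    fderiv ℝ (fun x => g a x + ∫ σ in c..d, h (a, σ) x) x v =
      fderiv ℝ (g a) x v + ∫ σ in c..d, fderiv ℝ (h (a, σ)) x v := by
  have hslice : BoundedC1On (uIcc c d) fun σ => h (a, σ) :=
    hh.comp_measurable measurable_prodMk_left (mapsTo_univ _ _)
  rw [fderiv_fun_add (hg.differentiable a x)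
    (hslice.hasFDerivAt_intervalIntegral x).differentiableAt, add_apply,
    hslice.fderiv_intervalIntegral_apply]

theorem intervalIntegrable_fderiv_apply {g : α → X → W} {S : Set α} (hg : BoundedC1On S g)
    {φ : ℝ → α} (hφ : Measurable φ) (hS : ∀ s ∈ uIcc c d, φ s ∈ S) {x v : ℝ → X}
    (hx : Measurable x) (hv : Measurable v) (hvb : ∃ C, ∀ s, ‖v s‖ ≤ C) :
    IntervalIntegrable (fun s => fderiv ℝ (g (φ s)) (x s) (v s)) volume c d := by
  obtain ⟨C, hC⟩ := hg.bounded
  obtain ⟨Cv, hCv⟩ := hvb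
  exact intervalIntegrable_iff.2 <| integrableOn_clm_apply_of_bounded measurableSet_uIoc
    measure_Ioc_lt_top.ne (measurable_fderiv_of_measurable_uncurry
      (hg.measurable.comp (hφ.prodMap measurable_id)) hx fun s => hg.differentiable (φ s)) hv
    (fun s hs => (hC _ (hS s (uIoc_subset_uIcc hs)) _).2) fun s _ => hCv s

theorem integral_fderiv_add_intervalIntegral_apply {g : α → X → W} {h : α × ℝ → X → W}
    (hg : BoundedC1On univ g) (hh : BoundedC1On univ h) {φ : ℝ → α} (hφ : Measurable φ)
    (c d : ℝ) {c' d' : ℝ} {x v : ℝ → X} (hx : Measurable x) (hv : Measurable v)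
    (hvb : ∃ C, ∀ s, ‖v s‖ ≤ C) :
    ∫ s in c'..d', fderiv ℝ (fun x => g (φ s) x + ∫ σ in c..d, h (φ s, σ) x) (x s) (v s) =
      (∫ s in c'..d', fderiv ℝ (g (φ s)) (x s) (v s)) +
        ∫ s in c'..d', ∫ σ in c..d, fderiv ℝ (h (φ s, σ)) (x s) (v s) := by
  have hH : BoundedC1On univ fun a x => ∫ σ in c..d, h (a, σ) x :=
    hh.intervalIntegral c measurable_const ⟨|d - c|, fun _ _ => le_rfl⟩
  have hHv : (fun s => ∫ σ in c..d, fderiv ℝ (h (φ s, σ)) (x s) (v s)) =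
      fun s => fderiv ℝ (fun x => ∫ σ in c..d, h (φ s, σ) x) (x s) (v s) := funext fun s =>
    ((hh.comp_measurable measurable_prodMk_left (mapsTo_univ _ _)).fderiv_intervalIntegral_apply
      _ _).symm
  rw [← intervalIntegral.integral_add
    (hg.intervalIntegrable_fderiv_apply hφ (fun _ _ => trivial) hx hv hvb)
    (hHv ▸ hH.intervalIntegrable_fderiv_apply hφ (fun _ _ => trivial) hx hv hvb)]
  exact intervalIntegral.integral_congr fun s _ =>
    hg.fderiv_add_intervalIntegral_apply hh (φ s) c d (x s) (v s)

end BoundedC1On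

end BoundedC1Integral

section Partial

variable {E U W : Type*} [NormedAddCommGroup E] [NormedSpace ℝ E] [NormedAddCommGroup U]
  [NormedSpace ℝ U] [NormedAddCommGroup W] [NormedSpace ℝ W] {Φ : E × U → W} {x : E} {w : U}

theorem DifferentiableAt.fderiv_comp_prodMk_left_apply (hΦ : DifferentiableAt ℝ Φ (x, w))
    (v : E) : fderiv ℝ (fun η => Φ (η, w)) x v = fderiv ℝ Φ (x, w) (v, 0) :=
  congrArg (· v) (hΦ.hasFDerivAt.comp x (hasFDerivAt_prodMk_left (𝕜 := ℝ) x w)).fderiv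

theorem DifferentiableAt.fderiv_comp_prodMk_right_apply (hΦ : DifferentiableAt ℝ Φ (x, w))
    (b : U) : fderiv ℝ (fun ν => Φ (x, ν)) w b = fderiv ℝ Φ (x, w) (0, b) :=
  congrArg (· b) (hΦ.hasFDerivAt.comp w (hasFDerivAt_prodMk_right (𝕜 := ℝ) x w)).fderiv

theorem DifferentiableAt.fderiv_apply_eq_add_partial (hΦ : DifferentiableAt ℝ Φ (x, w))
    (v : E) (b : U) : fderiv ℝ Φ (x, w) (v, b) =
      fderiv ℝ (fun η => Φ (η, w)) x v + fderiv ℝ (fun ν => Φ (x, ν)) w b := by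
  rw [hΦ.fderiv_comp_prodMk_left_apply, hΦ.fderiv_comp_prodMk_right_apply, ← map_add,
    Prod.mk_add_mk, add_zero, zero_add]

end Partial

section Triangle

variable {E : Type*} [NormedAddCommGroup E] [NormedSpace ℝ E]

theorem integral_integral_triangle_swap {k : ℝ → ℝ → E} {a b : ℝ} (hab : a ≤ b)
    (hk : IntegrableOn (uncurry k) (Icc a b ×ˢ Icc a b)) :
    IntervalIntegrable (fun t => ∫ s in t..b, k s t) volume a b ∧
      ∫ t in a..b, ∫ s in t..b, k s t = ∫ s in a..b, ∫ t in a..s, k s t := by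
  set μ := volume.restrict (Ioc a b)
  set K : ℝ × ℝ → E := {q | q.2 < q.1}.indicator (uncurry k)
  have hK : Integrable K (μ.prod μ) := by
    rw [Measure.prod_restrict, ← Measure.volume_eq_prod]
    exact (hk.mono_set (prod_mono Ioc_subset_Icc_self Ioc_subset_Icc_self)).indicator
      (measurableSet_lt measurable_snd measurable_fst)
  have hleft : ∀ t ∈ Ioc a b, ∫ s in t..b, k s t = ∫ s, K (s, t) ∂μ := by
    intro t ht
    have hset : Ioi t ∩ Ioc a b = Ioc t b := by
      rw [inter_comm, Ioc_inter_Ioi, sup_eq_right.2 ht.1.le]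
    have hKt : (fun s => K (s, t)) = (Ioi t).indicator fun s => k s t := by
      ext s
      simp [K, indicator_apply]
    rw [intervalIntegral.integral_of_le ht.2, hKt, integral_indicator measurableSet_Ioi,
      Measure.restrict_restrict measurableSet_Ioi, hset]
  have hright : ∀ s ∈ Ioc a b, ∫ t in a..s, k s t = ∫ t, K (s, t) ∂μ := by
    intro s hs
    have hset : Iio s ∩ Ioc a b = Ioo a s := by
      ext t
      simp only [mem_inter_iff, mem_Iio, mem_Ioc, mem_Ioo]
      exact ⟨fun h => ⟨h.2.1, h.1⟩, fun h => ⟨h.2, h.1, h.2.le.trans hs.2⟩⟩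
    have hKs : (fun t => K (s, t)) = (Iio s).indicator fun t => k s t := by
      ext t
      simp [K, indicator_apply]
    rw [intervalIntegral.integral_of_le hs.1.le, hKs, integral_indicator measurableSet_Iio,
      Measure.restrict_restrict measurableSet_Iio, hset, integral_Ioc_eq_integral_Ioo]
  refine ⟨?_, ?_⟩
  · rw [intervalIntegrable_iff_integrableOn_Ioc_of_le hab]
    exact hK.integral_prod_right.congr
      (ae_restrict_of_forall_mem measurableSet_Ioc fun t ht => (hleft t ht).symm)
  · rw [intervalIntegral.integral_of_le hab, intervalIntegral.integral_of_le hab,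
      setIntegral_congr_fun measurableSet_Ioc hleft, setIntegral_congr_fun measurableSet_Ioc hright]
    exact (integral_integral_swap (f := fun s t => K (s, t)) hK).symm

end Triangle

section Adjoint

variable {E F : Type*} [NormedAddCommGroup E] [NormedSpace ℝ E] [CompleteSpace E]
  [NormedAddCommGroup F] [NormedSpace ℝ F] [CompleteSpace F]
  {k : ℝ → ℝ → E} {v : ℝ → E} {ψ : ℝ → E →L[ℝ] F} {a b : ℝ}

theorem integral_adjoint_volterra (hab : a ≤ b) (hv : ∀ s ∈ Icc a b, v s = ∫ t in a..s, k s t)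
    (hk : ∀ s ∈ Icc a b, IntervalIntegrable (k s) volume a s)
    (hψk : IntegrableOn (fun q : ℝ × ℝ => ψ q.1 (k q.1 q.2)) (Icc a b ×ˢ Icc a b)) :
    IntervalIntegrable (fun t => ∫ s in t..b, ψ s (k s t)) volume a b ∧
      ∫ t in a..b, ∫ s in t..b, ψ s (k s t) = ∫ s in a..b, ψ s (v s) := by
  obtain ⟨hint, hswap⟩ := integral_integral_triangle_swap (k := fun s t => ψ s (k s t)) hab hψk
  refine ⟨hint, hswap.trans (intervalIntegral.integral_congr fun s hs => ?_)⟩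
  rw [uIcc_of_le hab] at hs
  rw [hv s hs, (ψ s).intervalIntegral_comp_comm (hk s hs)]

theorem integral_volterra_first_variation (hab : a ≤ b)
    (hv : ∀ s ∈ Icc a b, v s = ∫ t in a..s, k s t)
    (hk : ∀ s ∈ Icc a b, IntervalIntegrable (k s) volume a s)
    (hψk : IntegrableOn (fun q : ℝ × ℝ => ψ q.1 (k q.1 q.2)) (Icc a b ×ˢ Icc a b))
    (hψv : IntervalIntegrable (fun t => ψ t (v t)) volume a b)
    (ω : E →L[ℝ] F) {c : ℝ → F} (hc : IntervalIntegrable c volume a b) :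
    ∫ t in a..b, (ω (k b t) + c t + (∫ s in t..b, ψ s (k s t)) - ψ t (v t)) =
      ω (v b) + ∫ t in a..b, c t := by
  have hkb := hk b ⟨hab, le_rfl⟩
  have hωk : IntervalIntegrable (fun t => ω (k b t)) volume a b :=
    ⟨ω.integrable_comp hkb.1, ω.integrable_comp hkb.2⟩
  obtain ⟨hint, hadj⟩ := integral_adjoint_volterra hab hv hk hψk
  rw [intervalIntegral.integral_sub ((hωk.add hc).add hint) hψv,
    intervalIntegral.integral_add (hωk.add hc) hint, intervalIntegral.integral_add hωk hc, hadj,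
    ω.intervalIntegral_comp_comm hkb, ← hv b ⟨hab, le_rfl⟩, add_sub_cancel_right]

end Adjoint

section Hamiltonian

variable {X E : Type*}
  [NormedAddCommGroup X] [NormedSpace ℝ X] [FiniteDimensional ℝ X]
  [MeasurableSpace X] [BorelSpace X]
  [NormedAddCommGroup E] [NormedSpace ℝ E] [FiniteDimensional ℝ E]
  [MeasurableSpace E] [BorelSpace E]
  {g₁ : ℝ × ℝ → X → E} {g₂ : (ℝ × ℝ) × ℝ → X → E}
  {G₁ : ℝ → X → ℝ} {G₂ : ℝ × ℝ → X → ℝ} {ψ : ℝ → E →L[ℝ] ℝ} {t T : ℝ}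

/-- With `g₁ (s, t) p = f₁ s t p.1 p.2` and `g₂ ((s, t), σ) p = f₂ s t σ p.1 (y σ) p.2 (u σ)`,
the state equation reads `y s = ∫₀ˢ stateIntegrand g₁ g₂ s t (y t, u t) dt`. -/
noncomputable def stateIntegrand (g₁ : ℝ × ℝ → X → E) (g₂ : (ℝ × ℝ) × ℝ → X → E)
    (s t : ℝ) (p : X) : E :=
  g₁ (s, t) p + ∫ σ in (0:ℝ)..s, g₂ ((s, t), σ) p

noncomputable def costIntegrand (T : ℝ) (G₁ : ℝ → X → ℝ) (G₂ : ℝ × ℝ → X → ℝ) (t : ℝ)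
    (p : X) : ℝ :=
  G₁ t p + ∫ σ in (0:ℝ)..T, G₂ (t, σ) p

noncomputable def hamiltonian (T : ℝ) (g₁ : ℝ × ℝ → X → E) (g₂ : (ℝ × ℝ) × ℝ → X → E)
    (G₁ : ℝ → X → ℝ) (G₂ : ℝ × ℝ → X → ℝ) (ψ : ℝ → E →L[ℝ] ℝ) (ω : E →L[ℝ] ℝ)
    (t : ℝ) (p : X) : ℝ :=
  ω (stateIntegrand g₁ g₂ T t p) + costIntegrand T G₁ G₂ t p +
    ∫ s in t..T, ψ s (stateIntegrand g₁ g₂ s t p)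

theorem boundedC1On_intervalIntegral_fst (hg₂ : BoundedC1On univ g₂) (T : ℝ) :
    BoundedC1On {q : ℝ × ℝ | q.1 ∈ Icc 0 T} fun q x => ∫ σ in (0:ℝ)..q.1, g₂ (q, σ) x :=
  hg₂.intervalIntegral 0 measurable_fst
    ⟨T, fun q hq => by rw [sub_zero, abs_of_nonneg hq.1]; exact hq.2⟩

theorem boundedC1On_stateIntegrand (hg₁ : BoundedC1On univ g₁) (hg₂ : BoundedC1On univ g₂)
    (T : ℝ) : BoundedC1On {q : ℝ × ℝ | q.1 ∈ Icc 0 T} fun q => stateIntegrand g₁ g₂ q.1 q.2 :=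
  (hg₁.mono (subset_univ _)).add (boundedC1On_intervalIntegral_fst hg₂ T)

theorem boundedC1On_costIntegrand (hG₁ : BoundedC1On univ G₁) (hG₂ : BoundedC1On univ G₂)
    (T : ℝ) : BoundedC1On univ (costIntegrand T G₁ G₂) :=
  hG₁.add <| hG₂.intervalIntegral 0 measurable_const ⟨|T - 0|, fun _ _ => le_rfl⟩

theorem hamiltonian_eq (hg₁ : BoundedC1On univ g₁) (hg₂ : BoundedC1On univ g₂)
    (hψ : Measurable ψ) (hψb : ∃ C, ∀ s, ‖ψ s‖ ≤ C) (ω : E →L[ℝ] ℝ) (ht : t ∈ Icc 0 T)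
    (p : X) :
    hamiltonian T g₁ g₂ G₁ G₂ ψ ω t p =
      ω (g₁ (T, t) p + ∫ σ in (0:ℝ)..T, g₂ ((T, t), σ) p) +
        (G₁ t p + ∫ σ in (0:ℝ)..T, G₂ (t, σ) p) +
        ((∫ s in t..T, ψ s (g₁ (s, t) p)) +
          ∫ s in t..T, ∫ σ in (0:ℝ)..s, ψ s (g₂ ((s, t), σ) p)) := by
  have hint₁ : IntervalIntegrable (fun s => ψ s (g₁ (s, t) p)) volume t T :=
    ((hg₁.mono (subset_univ _)).clm_apply_slice hψ hψb ht).intervalIntegrable p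
  have hint₂ : IntervalIntegrable (fun s => ψ s (∫ σ in (0:ℝ)..s, g₂ ((s, t), σ) p)) volume t T :=
    ((boundedC1On_intervalIntegral_fst hg₂ T).clm_apply_slice hψ hψb ht).intervalIntegrable p
  simp only [hamiltonian, stateIntegrand, costIntegrand, map_add]
  rw [intervalIntegral.integral_add hint₁ hint₂]
  refine congrArg _ (congrArg _ (intervalIntegral.integral_congr fun s _ => ?_))
  exact ((ψ s).intervalIntegral_comp_comm ((hg₂.comp_measurable measurable_prodMk_left
    (mapsTo_univ _ _)).intervalIntegrable p)).symm

theorem hasFDerivAt_hamiltonian (hg₁ : BoundedC1On univ g₁) (hg₂ : BoundedC1On univ g₂)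
    (hG₁ : BoundedC1On univ G₁) (hG₂ : BoundedC1On univ G₂) (hψ : Measurable ψ)
    (hψb : ∃ C, ∀ s, ‖ψ s‖ ≤ C) (ω : E →L[ℝ] ℝ) (ht : t ∈ Icc 0 T) (x : X) :
    HasFDerivAt (hamiltonian T g₁ g₂ G₁ G₂ ψ ω t)
      (ω.comp (fderiv ℝ (stateIntegrand g₁ g₂ T t) x) + fderiv ℝ (costIntegrand T G₁ G₂ t) x +
        ∫ s in t..T, fderiv ℝ (fun p => ψ s (stateIntegrand g₁ g₂ s t p)) x) x :=
  have ha := boundedC1On_stateIntegrand hg₁ hg₂ T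
  ((ω.hasFDerivAt.comp x (ha.differentiable (T, t) x).hasFDerivAt).add
    ((boundedC1On_costIntegrand hG₁ hG₂ T).differentiable t x).hasFDerivAt).add
    ((ha.clm_apply_slice hψ hψb ht).hasFDerivAt_intervalIntegral x)

theorem fderiv_hamiltonian_apply_s8 (hg₁ : BoundedC1On univ g₁) (hg₂ : BoundedC1On univ g₂)
    (hG₁ : BoundedC1On univ G₁) (hG₂ : BoundedC1On univ G₂) (hψ : Measurable ψ)
    (hψb : ∃ C, ∀ s, ‖ψ s‖ ≤ C) (ω : E →L[ℝ] ℝ) (ht : t ∈ Icc 0 T) (x v : X) :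
    fderiv ℝ (hamiltonian T g₁ g₂ G₁ G₂ ψ ω t) x v =
      ω (fderiv ℝ (stateIntegrand g₁ g₂ T t) x v) + fderiv ℝ (costIntegrand T G₁ G₂ t) x v +
        ∫ s in t..T, ψ s (fderiv ℝ (stateIntegrand g₁ g₂ s t) x v) := by
  have ha := boundedC1On_stateIntegrand hg₁ hg₂ T
  rw [(hasFDerivAt_hamiltonian hg₁ hg₂ hG₁ hG₂ hψ hψb ω ht x).fderiv, add_apply, add_apply,
    ContinuousLinearMap.comp_apply, ContinuousLinearMap.intervalIntegral_apply
      ((ha.clm_apply_slice hψ hψb ht).intervalIntegrable_fderiv measurable_const)]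
  refine congrArg _ (intervalIntegral.integral_congr fun s _ => ?_)
  exact congrArg (· v) ((ψ s).hasFDerivAt.comp x (ha.differentiable (s, t) x).hasFDerivAt).fderiv

theorem integral_fderiv_stateIntegrand_apply (hg₁ : BoundedC1On univ g₁)
    (hg₂ : BoundedC1On univ g₂) {x v : ℝ → X} (hx : Measurable x) (hv : Measurable v)
    (hvb : ∃ C, ∀ s, ‖v s‖ ≤ C) (t : ℝ) :
    ∫ s in (0:ℝ)..t, fderiv ℝ (stateIntegrand g₁ g₂ t s) (x s) (v s) =
      (∫ s in (0:ℝ)..t, fderiv ℝ (g₁ (t, s)) (x s) (v s)) +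
        ∫ s in (0:ℝ)..t, ∫ σ in (0:ℝ)..t, fderiv ℝ (g₂ ((t, s), σ)) (x s) (v s) :=
  hg₁.integral_fderiv_add_intervalIntegral_apply hg₂ measurable_prodMk_left 0 t hx hv hvb

theorem integral_fderiv_costIntegrand_apply (hG₁ : BoundedC1On univ G₁)
    (hG₂ : BoundedC1On univ G₂) {x v : ℝ → X} (hx : Measurable x) (hv : Measurable v)
    (hvb : ∃ C, ∀ s, ‖v s‖ ≤ C) (T : ℝ) :
    ∫ t in (0:ℝ)..T, fderiv ℝ (costIntegrand T G₁ G₂ t) (x t) (v t) =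
      (∫ t in (0:ℝ)..T, fderiv ℝ (G₁ t) (x t) (v t)) +
        ∫ t in (0:ℝ)..T, ∫ σ in (0:ℝ)..T, fderiv ℝ (G₂ (t, σ)) (x t) (v t) :=
  hG₁.integral_fderiv_add_intervalIntegral_apply hG₂ measurable_id 0 T hx hv hvb

end Hamiltonian

section FirstVariation

variable {E U : Type*}
  [NormedAddCommGroup E] [NormedSpace ℝ E] [FiniteDimensional ℝ E]
  [MeasurableSpace E] [BorelSpace E]
  [NormedAddCommGroup U] [NormedSpace ℝ U] [FiniteDimensional ℝ U]
  [MeasurableSpace U] [BorelSpace U]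
  {g₁ : ℝ × ℝ → E × U → E} {g₂ : (ℝ × ℝ) × ℝ → E × U → E}
  {G₁ : ℝ → E × U → ℝ} {G₂ : ℝ × ℝ → E × U → ℝ}
  {ψ : ℝ → E →L[ℝ] ℝ} {y δy : ℝ → E} {u δu : ℝ → U} {T : ℝ}

theorem integral_fderiv_hamiltonian_control (hT : 0 ≤ T) (hg₁ : BoundedC1On univ g₁)
    (hg₂ : BoundedC1On univ g₂) (hG₁ : BoundedC1On univ G₁) (hG₂ : BoundedC1On univ G₂)
    (hψ : Measurable ψ) (hψb : ∃ C, ∀ t, ‖ψ t‖ ≤ C) (hy : Measurable y) (hu : Measurable u)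
    (hδy : Measurable δy) (hδu : Measurable δu) (hδb : ∃ C, ∀ t, ‖(δy t, δu t)‖ ≤ C)
    (ω : E →L[ℝ] ℝ)
    (hcostate : ∀ᵐ t ∂volume.restrict (Icc 0 T),
      ψ t = fderiv ℝ (fun η => hamiltonian T g₁ g₂ G₁ G₂ ψ ω t (η, u t)) (y t))
    (hlin : ∀ t ∈ Icc 0 T,
      δy t = ∫ s in (0:ℝ)..t, fderiv ℝ (stateIntegrand g₁ g₂ t s) (y s, u s) (δy s, δu s)) :
    ∫ t in (0:ℝ)..T, fderiv ℝ (fun ν => hamiltonian T g₁ g₂ G₁ G₂ ψ ω t (y t, ν)) (u t) (δu t) =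
      ω (δy T) + ∫ t in (0:ℝ)..T, fderiv ℝ (costIntegrand T G₁ G₂ t) (y t, u t) (δy t, δu t) := by
  set z : ℝ → E × U := fun t => (y t, u t)
  set δz : ℝ → E × U := fun t => (δy t, δu t)
  have hz : Measurable z := hy.prodMk hu
  have hδz : Measurable δz := hδy.prodMk hδu
  obtain ⟨Cψ, hCψ⟩ := hψb
  obtain ⟨Cδ, hCδ⟩ := hδb
  have ha := boundedC1On_stateIntegrand hg₁ hg₂ T
  obtain ⟨Ca, hCa⟩ := ha.bounded
  have hψk : IntegrableOn (fun q : ℝ × ℝ =>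
      ψ q.1 (fderiv ℝ (stateIntegrand g₁ g₂ q.1 q.2) (z q.2) (δz q.2))) (Icc 0 T ×ˢ Icc 0 T) :=
    integrableOn_clm_apply_of_bounded (measurableSet_Icc.prod measurableSet_Icc)
      (isCompact_Icc.prod isCompact_Icc).measure_lt_top.ne (hψ.comp measurable_fst)
      ((ha.measurable_fderiv (hz.comp measurable_snd)).clm_apply (hδz.comp measurable_snd))
      (fun q _ => hCψ q.1)
      fun q hq => ContinuousLinearMap.le_of_opNorm_le_of_le _ (hCa q hq.1 _).2 (hCδ q.2)
  have hψv : IntervalIntegrable (fun t => ψ t (δy t)) volume 0 T :=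
    (intervalIntegrable_iff_integrableOn_Ioc_of_le hT).2 <|
      integrableOn_clm_apply_of_bounded measurableSet_Ioc measure_Ioc_lt_top.ne hψ hδy
        (fun t _ => hCψ t) fun t _ => (norm_fst_le (δz t)).trans (hCδ t)
  have hpoint : ∀ᵐ t, t ∈ uIoc 0 T →
      fderiv ℝ (fun ν => hamiltonian T g₁ g₂ G₁ G₂ ψ ω t (y t, ν)) (u t) (δu t) =
        ω (fderiv ℝ (stateIntegrand g₁ g₂ T t) (z t) (δz t)) +
          fderiv ℝ (costIntegrand T G₁ G₂ t) (z t) (δz t) +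
          (∫ s in t..T, ψ s (fderiv ℝ (stateIntegrand g₁ g₂ s t) (z t) (δz t))) -
          ψ t (δy t) := by
    filter_upwards [(ae_restrict_iff' measurableSet_Icc).1 hcostate] with t hψt ht
    have ht' : t ∈ Icc 0 T := Ioc_subset_Icc_self (by rwa [uIoc_of_le hT] at ht)
    have hH := (hasFDerivAt_hamiltonian hg₁ hg₂ hG₁ hG₂ hψ ⟨Cψ, hCψ⟩ ω ht' (z t)).differentiableAt
    rw [hψt ht', hH.fderiv_comp_prodMk_right_apply, hH.fderiv_comp_prodMk_left_apply,
      ← fderiv_hamiltonian_apply_s8 hg₁ hg₂ hG₁ hG₂ hψ ⟨Cψ, hCψ⟩ ω ht', ← map_sub]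
    simp [z, δz]
  rw [intervalIntegral.integral_congr_ae hpoint]
  exact integral_volterra_first_variation hT hlin
    (fun s hs => ha.intervalIntegrable_fderiv_apply measurable_prodMk_left (fun _ _ => hs) hz hδz
      ⟨Cδ, hCδ⟩) hψk hψv ω
    ((boundedC1On_costIntegrand hG₁ hG₂ T).intervalIntegrable_fderiv_apply measurable_id
      (fun _ _ => trivial) hz hδz ⟨Cδ, hCδ⟩)

theorem volterra_first_variation_of_boundedC1On (hT : 0 ≤ T)
    (hg₁ : BoundedC1On univ g₁) (hg₂ : BoundedC1On univ g₂) (hG₁ : BoundedC1On univ G₁)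
    (hG₂ : BoundedC1On univ G₂) (hψ : Measurable ψ) (hψb : ∃ C, ∀ t, ‖ψ t‖ ≤ C)
    (hy : Measurable y) (hu : Measurable u) (hδy : Measurable δy) (hδyb : ∃ C, ∀ t, ‖δy t‖ ≤ C)
    (hδu : Measurable δu) (hδub : ∃ C, ∀ t, ‖δu t‖ ≤ C) (ω : E →L[ℝ] ℝ)
    (hcostate : ∀ᵐ t ∂volume.restrict (Icc 0 T),
      ψ t = fderiv ℝ (fun η => hamiltonian T g₁ g₂ G₁ G₂ ψ ω t (η, u t)) (y t))
    (hlin : ∀ t ∈ Icc 0 T,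
      δy t =
        (∫ s in (0:ℝ)..t,
          (fderiv ℝ (fun η => g₁ (t, s) (η, u s)) (y s) (δy s) +
            fderiv ℝ (fun ν => g₁ (t, s) (y s, ν)) (u s) (δu s))) +
        ∫ s in (0:ℝ)..t, ∫ σ in (0:ℝ)..t,
          (fderiv ℝ (fun η => g₂ ((t, s), σ) (η, u s)) (y s) (δy s) +
            fderiv ℝ (fun ν => g₂ ((t, s), σ) (y s, ν)) (u s) (δu s))) :
    ω (δy T) +
      (∫ t in (0:ℝ)..T,
        (fderiv ℝ (fun η => G₁ t (η, u t)) (y t) (δy t) +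
          fderiv ℝ (fun ν => G₁ t (y t, ν)) (u t) (δu t))) +
      (∫ t in (0:ℝ)..T, ∫ σ in (0:ℝ)..T,
        (fderiv ℝ (fun η => G₂ (t, σ) (η, u t)) (y t) (δy t) +
          fderiv ℝ (fun ν => G₂ (t, σ) (y t, ν)) (u t) (δu t))) =
    ∫ t in (0:ℝ)..T, fderiv ℝ (fun ν => hamiltonian T g₁ g₂ G₁ G₂ ψ ω t (y t, ν)) (u t) (δu t) := by
  have hδz : ∃ C, ∀ t, ‖(δy t, δu t)‖ ≤ C := by
    obtain ⟨Cy, hCy⟩ := hδyb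
    obtain ⟨Cu, hCu⟩ := hδub
    exact ⟨max Cy Cu, fun t => max_le_max (hCy t) (hCu t)⟩
  have split₁ := fun q x w => (hg₁.differentiable q (x, w)).fderiv_apply_eq_add_partial
  have split₂ := fun q x w => (hg₂.differentiable q (x, w)).fderiv_apply_eq_add_partial
  have splitG₁ := fun q x w => (hG₁.differentiable q (x, w)).fderiv_apply_eq_add_partial
  have splitG₂ := fun q x w => (hG₂.differentiable q (x, w)).fderiv_apply_eq_add_partial
  rw [integral_fderiv_hamiltonian_control hT hg₁ hg₂ hG₁ hG₂ hψ hψb hy hu hδy hδu hδz ω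
    hcostate fun t ht => ?_, integral_fderiv_costIntegrand_apply hG₁ hG₂ (hy.prodMk hu)
    (hδy.prodMk hδu) hδz, add_assoc]
  · simp only [splitG₁, splitG₂]
  · rw [hlin t ht,
      integral_fderiv_stateIntegrand_apply hg₁ hg₂ (hy.prodMk hu) (hδy.prodMk hδu) hδz]
    simp only [split₁, split₂]

end FirstVariation

theorem volterraHamiltonian_eq_hamiltonian {n m : ℕ} {T t : ℝ}
    {f₁ : ℝ → ℝ → (Fin n → ℝ) → (Fin m → ℝ) → (Fin n → ℝ)}
    {f₂ : ℝ → ℝ → ℝ → (Fin n → ℝ) → (Fin n → ℝ) → (Fin m → ℝ) → (Fin m → ℝ) → (Fin n → ℝ)}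
    (F₀ : ℝ → (Fin n → ℝ) → ℝ) (F₁ : ℝ → (Fin n → ℝ) → (Fin m → ℝ) → ℝ)
    (F₂ : ℝ → ℝ → (Fin n → ℝ) → (Fin n → ℝ) → (Fin m → ℝ) → (Fin m → ℝ) → ℝ)
    {y : ℝ → Fin n → ℝ} {u : ℝ → Fin m → ℝ} {ψ : ℝ → ((Fin n → ℝ) →L[ℝ] ℝ)}
    (hg₁ : BoundedC1On univ
      fun (q : ℝ × ℝ) (p : (Fin n → ℝ) × (Fin m → ℝ)) => f₁ q.1 q.2 p.1 p.2)
    (hg₂ : BoundedC1On univ fun (q : (ℝ × ℝ) × ℝ) (p : (Fin n → ℝ) × (Fin m → ℝ)) =>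
      f₂ q.1.1 q.1.2 q.2 p.1 (y q.2) p.2 (u q.2))
    (hψ : Measurable ψ) (hψb : ∃ C, ∀ s, ‖ψ s‖ ≤ C) (ω : (Fin n → ℝ) →L[ℝ] ℝ)
    (ht : t ∈ Icc 0 T) (η : Fin n → ℝ) (ν : Fin m → ℝ) :
    volterraHamiltonian T f₁ f₂ F₀ F₁ F₂ y u ψ ω t η ν =
      hamiltonian T (fun q p => f₁ q.1 q.2 p.1 p.2)
        (fun q p => f₂ q.1.1 q.1.2 q.2 p.1 (y q.2) p.2 (u q.2)) (fun t p => F₁ t p.1 p.2)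
        (fun q p => F₂ q.1 q.2 p.1 (y q.2) p.2 (u q.2)) ψ ω t (η, ν) + F₀ T (y T) := by
  rw [hamiltonian_eq hg₁ hg₂ hψ hψb ω ht, volterraHamiltonian]
  ring

theorem volterra_first_variation_formula_general
    (n m : ℕ) (T : ℝ) (hT : 0 < T)
    (f₁ : ℝ → ℝ → (Fin n → ℝ) → (Fin m → ℝ) → (Fin n → ℝ))
    (f₂ : ℝ → ℝ → ℝ → (Fin n → ℝ) → (Fin n → ℝ) → (Fin m → ℝ) → (Fin m → ℝ) → (Fin n → ℝ))
    (F₀ : ℝ → (Fin n → ℝ) → ℝ)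
    (F₁ : ℝ → (Fin n → ℝ) → (Fin m → ℝ) → ℝ)
    (F₂ : ℝ → ℝ → (Fin n → ℝ) → (Fin n → ℝ) → (Fin m → ℝ) → (Fin m → ℝ) → ℝ)
    -- joint measurability of the data
    (hf₁meas : Measurable fun q : ℝ × ℝ × (Fin n → ℝ) × (Fin m → ℝ) =>
      f₁ q.1 q.2.1 q.2.2.1 q.2.2.2)
    (hf₂meas : Measurable fun q : ℝ × ℝ × ℝ ×
        (Fin n → ℝ) × (Fin n → ℝ) × (Fin m → ℝ) × (Fin m → ℝ) =>
      f₂ q.1 q.2.1 q.2.2.1 q.2.2.2.1 q.2.2.2.2.1 q.2.2.2.2.2.1 q.2.2.2.2.2.2)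
    (hF₁meas : Measurable fun q : ℝ × (Fin n → ℝ) × (Fin m → ℝ) => F₁ q.1 q.2.1 q.2.2)
    (hF₂meas : Measurable fun q : ℝ × ℝ ×
        (Fin n → ℝ) × (Fin n → ℝ) × (Fin m → ℝ) × (Fin m → ℝ) =>
      F₂ q.1 q.2.1 q.2.2.1 q.2.2.2.1 q.2.2.2.2.1 q.2.2.2.2.2)
    -- twice continuous differentiability in the state and control arguments
    (hf₁smooth : ∀ t s, ContDiff ℝ 2 fun p : (Fin n → ℝ) × (Fin m → ℝ) => f₁ t s p.1 p.2)
    (hf₂smooth : ∀ t s σ, ContDiff ℝ 2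
      fun p : (Fin n → ℝ) × (Fin n → ℝ) × (Fin m → ℝ) × (Fin m → ℝ) =>
        f₂ t s σ p.1 p.2.1 p.2.2.1 p.2.2.2)
    (hF₁smooth : ∀ t, ContDiff ℝ 2 fun p : (Fin n → ℝ) × (Fin m → ℝ) => F₁ t p.1 p.2)
    (hF₂smooth : ∀ t σ, ContDiff ℝ 2
      fun p : (Fin n → ℝ) × (Fin n → ℝ) × (Fin m → ℝ) × (Fin m → ℝ) =>
        F₂ t σ p.1 p.2.1 p.2.2.1 p.2.2.2)
    -- uniform bounds on the data and their derivatives up to order 2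
    (hf₁bd : ∃ C, ∀ t s (p : (Fin n → ℝ) × (Fin m → ℝ)) (k : ℕ), k ≤ 2 →
      ‖iteratedFDeriv ℝ k (fun q : (Fin n → ℝ) × (Fin m → ℝ) => f₁ t s q.1 q.2) p‖ ≤ C)
    (hf₂bd : ∃ C, ∀ t s σ (p : (Fin n → ℝ) × (Fin n → ℝ) × (Fin m → ℝ) × (Fin m → ℝ))
      (k : ℕ), k ≤ 2 →
      ‖iteratedFDeriv ℝ k
        (fun q : (Fin n → ℝ) × (Fin n → ℝ) × (Fin m → ℝ) × (Fin m → ℝ) =>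
          f₂ t s σ q.1 q.2.1 q.2.2.1 q.2.2.2) p‖ ≤ C)
    (hF₁bd : ∃ C, ∀ t (p : (Fin n → ℝ) × (Fin m → ℝ)) (k : ℕ), k ≤ 2 →
      ‖iteratedFDeriv ℝ k (fun q : (Fin n → ℝ) × (Fin m → ℝ) => F₁ t q.1 q.2) p‖ ≤ C)
    (hF₂bd : ∃ C, ∀ t σ (p : (Fin n → ℝ) × (Fin n → ℝ) × (Fin m → ℝ) × (Fin m → ℝ))
      (k : ℕ), k ≤ 2 →
      ‖iteratedFDeriv ℝ k
        (fun q : (Fin n → ℝ) × (Fin n → ℝ) × (Fin m → ℝ) × (Fin m → ℝ) =>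
          F₂ t σ q.1 q.2.1 q.2.2.1 q.2.2.2) p‖ ≤ C)
    -- bounded measurable state, control, costate; ω = ∇_Y F₀(T, y(T))
    (y : ℝ → Fin n → ℝ) (u : ℝ → Fin m → ℝ) (ψ : ℝ → ((Fin n → ℝ) →L[ℝ] ℝ))
    (hy : Measurable y)
    (hu : Measurable u)
    (hψ : StronglyMeasurable ψ) (hψbd : ∃ C, ∀ t, ‖ψ t‖ ≤ C)
    (ω : (Fin n → ℝ) →L[ℝ] ℝ) (hω : ω = fderiv ℝ (fun Y : Fin n → ℝ => F₀ T Y) (y T))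
    -- bounded measurable variations
    (δy : ℝ → Fin n → ℝ) (δu : ℝ → Fin m → ℝ)
    (hδy : Measurable δy) (hδybd : ∃ C, ∀ t, ‖δy t‖ ≤ C)
    (hδu : Measurable δu) (hδubd : ∃ C, ∀ t, ‖δu t‖ ≤ C)
    -- the costate Hamiltonian equation ψ(t) = ∇_y H(t) a.e. on [0,T]
    (hcostate : ∀ᵐ t ∂volume.restrict (Set.Icc (0 : ℝ) T),
      ψ t = fderiv ℝ
        (fun η => volterraHamiltonian T f₁ f₂ F₀ F₁ F₂ y u ψ ω t η (u t)) (y t))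
    -- the linearized state equation, for every t ∈ [0,T] (including t = T)
    (hlin : ∀ t ∈ Set.Icc (0 : ℝ) T,
      δy t =
        (∫ s in (0:ℝ)..t,
          (fderiv ℝ (fun η => f₁ t s η (u s)) (y s) (δy s) +
            fderiv ℝ (fun ν => f₁ t s (y s) ν) (u s) (δu s))) +
        ∫ s in (0:ℝ)..t, ∫ σ in (0:ℝ)..t,
          (fderiv ℝ (fun η => f₂ t s σ η (y σ) (u s) (u σ)) (y s) (δy s) +
            fderiv ℝ (fun ν => f₂ t s σ (y s) (y σ) ν (u σ)) (u s) (δu s))) :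
    -- conclusion: δJ = ∫₀ᵀ ∇_u H(t) δu(t) dt
    fderiv ℝ (fun Y : Fin n → ℝ => F₀ T Y) (y T) (δy T) +
      (∫ t in (0:ℝ)..T,
        (fderiv ℝ (fun η => F₁ t η (u t)) (y t) (δy t) +
          fderiv ℝ (fun ν => F₁ t (y t) ν) (u t) (δu t))) +
      (∫ t in (0:ℝ)..T, ∫ σ in (0:ℝ)..T,
        (fderiv ℝ (fun η => F₂ t σ η (y σ) (u t) (u σ)) (y t) (δy t) +
          fderiv ℝ (fun ν => F₂ t σ (y t) (y σ) ν (u σ)) (u t) (δu t))) =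
    ∫ t in (0:ℝ)..T,
      fderiv ℝ (fun ν => volterraHamiltonian T f₁ f₂ F₀ F₁ F₂ y u ψ ω t (y t) ν) (u t)
        (δu t) := by
  have hg₁ : BoundedC1On univ
      fun (q : ℝ × ℝ) (p : (Fin n → ℝ) × (Fin m → ℝ)) => f₁ q.1 q.2 p.1 p.2 :=
    .of_norm_iteratedFDeriv_le (by fun_prop) (fun q => (hf₁smooth _ _).differentiable two_ne_zero)
      (hf₁bd.imp fun _ hC q p k hk => hC _ _ p k (hk.trans one_le_two))
  have hg₂ : BoundedC1On univ fun (q : (ℝ × ℝ) × ℝ) (p : (Fin n → ℝ) × (Fin m → ℝ)) =>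
      f₂ q.1.1 q.1.2 q.2 p.1 (y q.2) p.2 (u q.2) :=
    (BoundedC1On.of_norm_iteratedFDeriv_le (g := fun (q : (ℝ × ℝ) × ℝ)
        (P : (Fin n → ℝ) × (Fin n → ℝ) × (Fin m → ℝ) × (Fin m → ℝ)) =>
          f₂ q.1.1 q.1.2 q.2 P.1 P.2.1 P.2.2.1 P.2.2.2) (by fun_prop)
      (fun q => (hf₂smooth _ _ _).differentiable two_ne_zero)
      (hf₂bd.imp fun _ hC q P k hk => hC _ _ _ P k (hk.trans one_le_two))).comp_insert
      (hy.comp measurable_snd) (hu.comp measurable_snd)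
  have hG₁ : BoundedC1On univ fun (t : ℝ) (p : (Fin n → ℝ) × (Fin m → ℝ)) => F₁ t p.1 p.2 :=
    .of_norm_iteratedFDeriv_le (by fun_prop) (fun t => (hF₁smooth t).differentiable two_ne_zero)
      (hF₁bd.imp fun _ hC t p k hk => hC t p k (hk.trans one_le_two))
  have hG₂ : BoundedC1On univ fun (q : ℝ × ℝ) (p : (Fin n → ℝ) × (Fin m → ℝ)) =>
      F₂ q.1 q.2 p.1 (y q.2) p.2 (u q.2) :=
    (BoundedC1On.of_norm_iteratedFDeriv_le (g := fun (q : ℝ × ℝ)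
        (P : (Fin n → ℝ) × (Fin n → ℝ) × (Fin m → ℝ) × (Fin m → ℝ)) =>
          F₂ q.1 q.2 P.1 P.2.1 P.2.2.1 P.2.2.2) (by fun_prop)
      (fun q => (hF₂smooth _ _).differentiable two_ne_zero)
      (hF₂bd.imp fun _ hC q P k hk => hC _ _ P k (hk.trans one_le_two))).comp_insert
      (hy.comp measurable_snd) (hu.comp measurable_snd)
  have hH := fun t (ht : t ∈ Icc 0 T) =>
    volterraHamiltonian_eq_hamiltonian F₀ F₁ F₂ hg₁ hg₂ hψ.measurable hψbd ω ht
  rw [← hω]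
  convert volterra_first_variation_of_boundedC1On hT.le hg₁ hg₂ hG₁ hG₂ hψ.measurable hψbd
    hy hu hδy hδybd hδu hδubd ω ?_ hlin using 1
  · refine intervalIntegral.integral_congr fun t ht => ?_
    simp only [hH t (uIcc_of_le hT.le ▸ ht), fderiv_add_const]
  · filter_upwards [hcostate, ae_restrict_mem measurableSet_Icc] with t h ht
    simpa only [hH t ht, fderiv_add_const] using h

/-- Volterra first-order variation formula (7.7): under the costate Hamiltonian equation and
the linearized state equation, the first variation of the cost equals
`∫₀ᵀ ∇_u H(t) δu(t) dt`. -/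
theorem volterra_first_variation_formula
    (n m : ℕ) (T : ℝ) (hT : 0 < T)
    (f₁ : ℝ → ℝ → (Fin n → ℝ) → (Fin m → ℝ) → (Fin n → ℝ))
    (f₂ : ℝ → ℝ → ℝ → (Fin n → ℝ) → (Fin n → ℝ) → (Fin m → ℝ) → (Fin m → ℝ) → (Fin n → ℝ))
    (F₀ : ℝ → (Fin n → ℝ) → ℝ)
    (F₁ : ℝ → (Fin n → ℝ) → (Fin m → ℝ) → ℝ)
    (F₂ : ℝ → ℝ → (Fin n → ℝ) → (Fin n → ℝ) → (Fin m → ℝ) → (Fin m → ℝ) → ℝ)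
    -- joint measurability of the data
    (hf₁meas : Measurable fun q : ℝ × ℝ × (Fin n → ℝ) × (Fin m → ℝ) =>
      f₁ q.1 q.2.1 q.2.2.1 q.2.2.2)
    (hf₂meas : Measurable fun q : ℝ × ℝ × ℝ ×
        (Fin n → ℝ) × (Fin n → ℝ) × (Fin m → ℝ) × (Fin m → ℝ) =>
      f₂ q.1 q.2.1 q.2.2.1 q.2.2.2.1 q.2.2.2.2.1 q.2.2.2.2.2.1 q.2.2.2.2.2.2)
    (hF₀meas : Measurable fun q : ℝ × (Fin n → ℝ) => F₀ q.1 q.2)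
    (hF₁meas : Measurable fun q : ℝ × (Fin n → ℝ) × (Fin m → ℝ) => F₁ q.1 q.2.1 q.2.2)
    (hF₂meas : Measurable fun q : ℝ × ℝ ×
        (Fin n → ℝ) × (Fin n → ℝ) × (Fin m → ℝ) × (Fin m → ℝ) =>
      F₂ q.1 q.2.1 q.2.2.1 q.2.2.2.1 q.2.2.2.2.1 q.2.2.2.2.2)
    -- twice continuous differentiability in the state and control arguments
    (hf₁smooth : ∀ t s, ContDiff ℝ 2 fun p : (Fin n → ℝ) × (Fin m → ℝ) => f₁ t s p.1 p.2)
    (hf₂smooth : ∀ t s σ, ContDiff ℝ 2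
      fun p : (Fin n → ℝ) × (Fin n → ℝ) × (Fin m → ℝ) × (Fin m → ℝ) =>
        f₂ t s σ p.1 p.2.1 p.2.2.1 p.2.2.2)
    (hF₀smooth : ∀ t, ContDiff ℝ 2 fun Y : Fin n → ℝ => F₀ t Y)
    (hF₁smooth : ∀ t, ContDiff ℝ 2 fun p : (Fin n → ℝ) × (Fin m → ℝ) => F₁ t p.1 p.2)
    (hF₂smooth : ∀ t σ, ContDiff ℝ 2
      fun p : (Fin n → ℝ) × (Fin n → ℝ) × (Fin m → ℝ) × (Fin m → ℝ) =>
        F₂ t σ p.1 p.2.1 p.2.2.1 p.2.2.2)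
    -- uniform bounds on the data and their derivatives up to order 2
    (hf₁bd : ∃ C, ∀ t s (p : (Fin n → ℝ) × (Fin m → ℝ)) (k : ℕ), k ≤ 2 →
      ‖iteratedFDeriv ℝ k (fun q : (Fin n → ℝ) × (Fin m → ℝ) => f₁ t s q.1 q.2) p‖ ≤ C)
    (hf₂bd : ∃ C, ∀ t s σ (p : (Fin n → ℝ) × (Fin n → ℝ) × (Fin m → ℝ) × (Fin m → ℝ))
      (k : ℕ), k ≤ 2 →
      ‖iteratedFDeriv ℝ k
        (fun q : (Fin n → ℝ) × (Fin n → ℝ) × (Fin m → ℝ) × (Fin m → ℝ) =>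
          f₂ t s σ q.1 q.2.1 q.2.2.1 q.2.2.2) p‖ ≤ C)
    (hF₀bd : ∃ C, ∀ t (Y : Fin n → ℝ) (k : ℕ), k ≤ 2 →
      ‖iteratedFDeriv ℝ k (fun Y' : Fin n → ℝ => F₀ t Y') Y‖ ≤ C)
    (hF₁bd : ∃ C, ∀ t (p : (Fin n → ℝ) × (Fin m → ℝ)) (k : ℕ), k ≤ 2 →
      ‖iteratedFDeriv ℝ k (fun q : (Fin n → ℝ) × (Fin m → ℝ) => F₁ t q.1 q.2) p‖ ≤ C)
    (hF₂bd : ∃ C, ∀ t σ (p : (Fin n → ℝ) × (Fin n → ℝ) × (Fin m → ℝ) × (Fin m → ℝ))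
      (k : ℕ), k ≤ 2 →
      ‖iteratedFDeriv ℝ k
        (fun q : (Fin n → ℝ) × (Fin n → ℝ) × (Fin m → ℝ) × (Fin m → ℝ) =>
          F₂ t σ q.1 q.2.1 q.2.2.1 q.2.2.2) p‖ ≤ C)
    -- symmetry of f₂ and F₂
    (hf₂symm : ∀ t s σ y₁ y₂ u₁ u₂, f₂ t s σ y₁ y₂ u₁ u₂ = f₂ t σ s y₂ y₁ u₂ u₁)
    (hF₂symm : ∀ t σ y₁ y₂ u₁ u₂, F₂ t σ y₁ y₂ u₁ u₂ = F₂ σ t y₂ y₁ u₂ u₁)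
    -- bounded measurable state, control, costate; ω = ∇_Y F₀(T, y(T))
    (y : ℝ → Fin n → ℝ) (u : ℝ → Fin m → ℝ) (ψ : ℝ → ((Fin n → ℝ) →L[ℝ] ℝ))
    (hy : Measurable y) (hybd : ∃ C, ∀ t, ‖y t‖ ≤ C)
    (hu : Measurable u) (hubd : ∃ C, ∀ t, ‖u t‖ ≤ C)
    (hψ : StronglyMeasurable ψ) (hψbd : ∃ C, ∀ t, ‖ψ t‖ ≤ C)
    (ω : (Fin n → ℝ) →L[ℝ] ℝ) (hω : ω = fderiv ℝ (fun Y : Fin n → ℝ => F₀ T Y) (y T))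
    -- bounded measurable variations
    (δy : ℝ → Fin n → ℝ) (δu : ℝ → Fin m → ℝ)
    (hδy : Measurable δy) (hδybd : ∃ C, ∀ t, ‖δy t‖ ≤ C)
    (hδu : Measurable δu) (hδubd : ∃ C, ∀ t, ‖δu t‖ ≤ C)
    -- the costate Hamiltonian equation ψ(t) = ∇_y H(t) a.e. on [0,T]
    (hcostate : ∀ᵐ t ∂volume.restrict (Set.Icc (0 : ℝ) T),
      ψ t = fderiv ℝ
        (fun η => volterraHamiltonian T f₁ f₂ F₀ F₁ F₂ y u ψ ω t η (u t)) (y t))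
    -- the linearized state equation, for every t ∈ [0,T] (including t = T)
    (hlin : ∀ t ∈ Set.Icc (0 : ℝ) T,
      δy t =
        (∫ s in (0:ℝ)..t,
          (fderiv ℝ (fun η => f₁ t s η (u s)) (y s) (δy s) +
            fderiv ℝ (fun ν => f₁ t s (y s) ν) (u s) (δu s))) +
        ∫ s in (0:ℝ)..t, ∫ σ in (0:ℝ)..t,
          (fderiv ℝ (fun η => f₂ t s σ η (y σ) (u s) (u σ)) (y s) (δy s) +
            fderiv ℝ (fun ν => f₂ t s σ (y s) (y σ) ν (u σ)) (u s) (δu s))) :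
    -- conclusion: δJ = ∫₀ᵀ ∇_u H(t) δu(t) dt
    fderiv ℝ (fun Y : Fin n → ℝ => F₀ T Y) (y T) (δy T) +
      (∫ t in (0:ℝ)..T,
        (fderiv ℝ (fun η => F₁ t η (u t)) (y t) (δy t) +
          fderiv ℝ (fun ν => F₁ t (y t) ν) (u t) (δu t))) +
      (∫ t in (0:ℝ)..T, ∫ σ in (0:ℝ)..T,
        (fderiv ℝ (fun η => F₂ t σ η (y σ) (u t) (u σ)) (y t) (δy t) +
          fderiv ℝ (fun ν => F₂ t σ (y t) (y σ) ν (u σ)) (u t) (δu t))) =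
    ∫ t in (0:ℝ)..T,
      fderiv ℝ (fun ν => volterraHamiltonian T f₁ f₂ F₀ F₁ F₂ y u ψ ω t (y t) ν) (u t)
        (δu t) :=
  volterra_first_variation_formula_general n m T hT f₁ f₂ F₀ F₁ F₂ hf₁meas hf₂meas hF₁meas hF₂meas
    hf₁smooth hf₂smooth hF₁smooth hF₂smooth hf₁bd hf₂bd hF₁bd hF₂bd y u ψ hy hu hψ hψbd ω hω δy δu
    hδy hδybd hδu hδubd hcostate hlin
end
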